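/- arXiv:math/9612223 — 5 statements merged into one kernel-verified Lean document; each statement's English description precedes it below -/
import Mathlib

section
/- For every Borel set E ⊆ [0,1], the Erdős measure μ satisfies the self-similar relation: μ(E) = (1/2)μ(λE) if E ⊆ [0, λ⁻²); μ(E) = (1/2)(μ(λE) + μ(λE − λ⁻¹)) if E ⊆ [λ⁻², λ⁻¹); and μ(E) = (1/2)μ(λE − λ⁻¹) if E ⊆ [λ⁻¹, 1]. Here λE = {λx : x ∈ E} and λE − λ⁻¹ = {λx − λ⁻¹ : x ∈ E}. -/
open MeasureTheory Filter Topology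
open scoped ENNReal

/-- The golden ratio λ = (1+√5)/2. -/
noncomputable def gold : ℝ := (1 + Real.sqrt 5) / 2

/-- `p` is the Bernoulli (1/2,1/2) product measure on `{0,1}^ℕ`, characterized by its
values on cylinder sets. -/
def IsCoinMeasure (p : Measure (ℕ → Bool)) : Prop :=
  ∀ (s : Finset ℕ) (b : ℕ → Bool), p {ε | ∀ i ∈ s, ε i = b i} = (2 : ℝ≥0∞)⁻¹ ^ s.card

/-- π(ε) = Σ_{k=1}^∞ ε_k λ^{-k-1} (indices shifted so that `ε k` is `ε_{k+1}`). -/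
noncomputable def piMap (ε : ℕ → Bool) : ℝ := ∑' k : ℕ, if ε k then gold⁻¹ ^ (k + 2) else 0

/-- The Erdős measure: the pushforward of the coin measure `p` under `piMap`. -/
noncomputable def erdosOf (p : Measure (ℕ → Bool)) : Measure ℝ := p.map piMap

/-! ### Algebraic facts about the golden ratio -/

lemma one_lt_gold' : 1 < gold := Real.one_lt_goldenRatio
lemma gold_pos' : (0:ℝ) < gold := Real.goldenRatio_pos
lemma gold_inv_lt_one : gold⁻¹ < 1 := inv_lt_one_of_one_lt₀ one_lt_gold'
lemma gold_inv_pos : (0:ℝ) < gold⁻¹ := inv_pos.2 gold_pos'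
lemma gpow_pos (n : ℕ) : (0:ℝ) < gold⁻¹ ^ n := pow_pos gold_inv_pos n
lemma gold_sq' : gold ^ 2 = gold + 1 := Real.goldenRatio_sq
lemma gold_inv_eq : gold⁻¹ = gold - 1 :=
  inv_eq_of_mul_eq_one_right (by linear_combination gold_sq')
lemma gold_inv_sq : gold⁻¹ ^ 2 = 2 - gold := by
  rw [gold_inv_eq]; linear_combination gold_sq'
lemma gold_inv_add_sq : gold⁻¹ + gold⁻¹ ^ 2 = 1 := by
  rw [gold_inv_sq, gold_inv_eq]; ring
lemma gold_mul_inv : gold * gold⁻¹ = 1 := mul_inv_cancel₀ (ne_of_gt gold_pos')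
lemma gold_mul_inv_sq : gold * gold⁻¹ ^ 2 = gold⁻¹ := by
  rw [sq, ← mul_assoc, gold_mul_inv, one_mul]

/-! ### Analytic facts about `piMap` -/

lemma summable_geo : Summable (fun k : ℕ => gold⁻¹ ^ (k + 2)) := by
  refine ((summable_geometric_of_lt_one gold_inv_pos.le gold_inv_lt_one).mul_left
    (gold⁻¹ ^ 2)).congr (fun k => ?_)
  rw [pow_add, mul_comm]

lemma summable_piMap (ε : ℕ → Bool) :
    Summable (fun k : ℕ => if ε k then gold⁻¹ ^ (k + 2) else 0) := by
  refine Summable.of_nonneg_of_le (fun k => ?_) (fun k => ?_) summable_geo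
  · split
    · exact (gpow_pos _).le
    · exact le_rfl
  · split
    · exact le_rfl
    · exact (gpow_pos _).le

lemma tsum_geo : ∑' k : ℕ, gold⁻¹ ^ (k + 2) = 1 := by
  have h1 : ∑' k : ℕ, gold⁻¹ ^ k = (1 - gold⁻¹)⁻¹ :=
    tsum_geometric_of_lt_one gold_inv_pos.le gold_inv_lt_one
  have h3 : ∑' k : ℕ, gold⁻¹ ^ (k + 2) = (∑' k : ℕ, gold⁻¹ ^ k) * gold⁻¹ ^ 2 := by
    simp_rw [pow_add]
    exact tsum_mul_right
  rw [h3, h1]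
  have h2 : 1 - gold⁻¹ = gold⁻¹ ^ 2 := by linarith [gold_inv_add_sq]
  rw [h2, inv_mul_cancel₀ (ne_of_gt (gpow_pos 2))]

lemma piMap_nonneg (ε : ℕ → Bool) : 0 ≤ piMap ε := by
  refine tsum_nonneg (fun k => ?_)
  split
  · exact (gpow_pos _).le
  · exact le_rfl

lemma piMap_lt_one (ε : ℕ → Bool) (j : ℕ) (hj : ε j = false) : piMap ε < 1 := by
  have hsj : Summable (fun k : ℕ => if k = j then gold⁻¹ ^ (j+2) else 0) :=
    summable_of_ne_finset_zero (s := {j}) (by intro k hk; simp at hk; simp [hk])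
  have key : piMap ε + gold⁻¹ ^ (j + 2) ≤ 1 := by
    rw [← tsum_geo]
    have heq : piMap ε + gold⁻¹ ^ (j+2) = ∑' k : ℕ, ((if ε k then gold⁻¹ ^ (k + 2) else 0)
        + if k = j then gold⁻¹ ^ (j+2) else 0) := by
      rw [Summable.tsum_add (summable_piMap ε) hsj]
      congr 1
      simp
    rw [heq]
    refine Summable.tsum_le_tsum (fun k => ?_) ((summable_piMap ε).add hsj) summable_geo
    rcases eq_or_ne k j with rfl | hk
    · rw [hj, if_neg (by simp), if_pos rfl, zero_add]
    · rw [if_neg hk, add_zero]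
      split
      · exact le_rfl
      · exact (gpow_pos _).le
  linarith [gpow_pos (j+2)]

/-- The shift map on sequences. -/
def shift (ε : ℕ → Bool) : ℕ → Bool := fun n => ε (n + 1)

lemma piMap_shift (ε : ℕ → Bool) :
    gold * piMap ε = (if ε 0 then gold⁻¹ else 0) + piMap (shift ε) := by
  have h0 : piMap ε = (if ε 0 then gold⁻¹ ^ 2 else 0)
      + gold⁻¹ * piMap (shift ε) := by
    rw [piMap, Summable.tsum_eq_zero_add (summable_piMap ε)]
    congr 1
    rw [piMap, ← tsum_mul_left]
    congr 1
    ext k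
    rw [mul_ite, mul_zero, ← pow_succ']
    simp only [shift, show ∀ k : ℕ, k + 1 + 2 = k + 2 + 1 from fun k => rfl]
    rfl
  rw [h0, mul_add, ← mul_assoc, gold_mul_inv, one_mul, mul_ite, mul_zero, gold_mul_inv_sq]

/-! ### Measurability -/

lemma measurableSet_cyl (s : Finset ℕ) (b : ℕ → Bool) :
    MeasurableSet {ε : ℕ → Bool | ∀ i ∈ s, ε i = b i} := by
  have h : {ε : ℕ → Bool | ∀ i ∈ s, ε i = b i} = ⋂ i ∈ s, (fun ε : ℕ → Bool => ε i) ⁻¹' {b i} := by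
    ext ε; simp
  rw [h]
  exact MeasurableSet.biInter (s.countable_toSet) (fun i _ =>
    (measurable_pi_apply i) (measurableSet_singleton (b i)))

lemma measurable_shift : Measurable shift :=
  measurable_pi_lambda _ (fun n => measurable_pi_apply (n + 1))

lemma measurable_eval0 (b : Bool) : MeasurableSet {ε : ℕ → Bool | ε 0 = b} := by
  have h : {ε : ℕ → Bool | ε 0 = b} = (fun ε : ℕ → Bool => ε 0) ⁻¹' {b} := rfl
  rw [h]
  exact (measurable_pi_apply 0) (measurableSet_singleton b)

lemma measurable_piMap : Measurable piMap := by
  have hmeas : ∀ n : ℕ, Measurable (fun ε : ℕ → Bool =>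
      ∑ k ∈ Finset.range n, if ε k then gold⁻¹ ^ (k + 2) else 0) := by
    intro n
    refine Finset.measurable_sum _ (fun k _ => ?_)
    have : Measurable (fun b : Bool => if b then gold⁻¹ ^ (k + 2) else (0:ℝ)) :=
      measurable_of_countable _
    exact this.comp (measurable_pi_apply k)
  refine measurable_of_tendsto_metrizable hmeas ?_
  rw [tendsto_pi_nhds]
  intro ε
  exact (summable_piMap ε).hasSum.tendsto_sum_nat

/-! ### Uniqueness of coin measures -/

lemma coin_univ {m : Measure (ℕ → Bool)} (hm : IsCoinMeasure m) : m Set.univ = 1 := by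
  have := hm ∅ (fun _ => false)
  simpa using this

lemma coin_cylinder {m : Measure (ℕ → Bool)} (hm : IsCoinMeasure m)
    (I : Finset ℕ) (S : Set (∀ _ : I, Bool)) :
    m (cylinder I S) = S.toFinite.toFinset.card * 2⁻¹ ^ I.card := by
  classical
  have hsingle : ∀ f : ∀ _ : I, Bool,
      cylinder (α := fun _ : ℕ => Bool) I {f}
        = {ε : ℕ → Bool | ∀ i ∈ I, ε i = (fun j => if h : j ∈ I then f ⟨j, h⟩ else false) i} := by
    intro f
    ext ε
    simp only [mem_cylinder, Set.mem_singleton_iff, Set.mem_setOf_eq, funext_iff,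
      Finset.restrict]
    constructor
    · intro h i hi; rw [dif_pos hi]; exact h ⟨i, hi⟩
    · intro h i; rw [h i.1 i.2, dif_pos i.2]
  have hdecomp : cylinder I S
      = ⋃ f ∈ S.toFinite.toFinset, cylinder (α := fun _ : ℕ => Bool) I {f} := by
    ext ε
    simp [mem_cylinder]
  rw [hdecomp, measure_biUnion_finset ?_ ?_]
  · rw [Finset.sum_congr rfl (fun f _ => by rw [hsingle f, hm]), Finset.sum_const, nsmul_eq_mul]
  · intro f hf g hg hfg
    simp only [Function.onFun, Set.disjoint_left]
    intro ε hε1 hε2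
    simp only [mem_cylinder, Set.mem_singleton_iff] at hε1 hε2
    exact hfg (hε1 ▸ hε2 ▸ rfl)
  · intro f _
    rw [hsingle f]
    exact measurableSet_cyl _ _

lemma coin_unique {m1 m2 : Measure (ℕ → Bool)} (h1 : IsCoinMeasure m1)
    (h2 : IsCoinMeasure m2) : m1 = m2 := by
  have hf1 : IsFiniteMeasure m1 := ⟨by rw [coin_univ h1]; exact ENNReal.one_lt_top⟩
  refine ext_of_generate_finite (measurableCylinders (fun _ : ℕ => Bool))
    generateFrom_measurableCylinders.symm isPiSystem_measurableCylinders ?_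
    (by rw [coin_univ h1, coin_univ h2])
  intro s hs
  obtain ⟨I, S, _, rfl⟩ := (mem_measurableCylinders s).1 hs
  rw [coin_cylinder h1, coin_cylinder h2]

/-! ### The key shift-conditioning identity -/

lemma coin_shift {p : Measure (ℕ → Bool)} (hp : IsCoinMeasure p) (b : Bool)
    {A : Set (ℕ → Bool)} (hA : MeasurableSet A) :
    p (shift ⁻¹' A ∩ {ε | ε 0 = b}) = 2⁻¹ * p A := by
  classical
  set ν : Measure (ℕ → Bool) := (2 : ℝ≥0∞) • ((p.restrict {ε | ε 0 = b}).map shift) with hν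
  have hν_apply : ∀ {B : Set (ℕ → Bool)}, MeasurableSet B →
      ν B = 2 * p (shift ⁻¹' B ∩ {ε | ε 0 = b}) := by
    intro B hB
    rw [hν]
    simp only [Measure.smul_apply, smul_eq_mul]
    rw [Measure.map_apply measurable_shift hB, Measure.restrict_apply (measurable_shift hB)]
  have hνcoin : IsCoinMeasure ν := by
    intro s c
    rw [hν_apply (measurableSet_cyl s c)]
    have hset : shift ⁻¹' {ε | ∀ i ∈ s, ε i = c i} ∩ {ε | ε 0 = b}
        = {ε : ℕ → Bool | ∀ i ∈ insert 0 (s.image (· + 1)),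
            ε i = (fun j => if j = 0 then b else c (j - 1)) i} := by
      ext ε
      simp only [Set.mem_inter_iff, Set.mem_preimage, Set.mem_setOf_eq, Finset.mem_insert,
        Finset.mem_image, shift]
      constructor
      · rintro ⟨h1, h2⟩ i hi
        rcases hi with rfl | ⟨j, hj, rfl⟩
        · simpa using h2
        · simpa using h1 j hj
      · intro h
        refine ⟨fun j hj => ?_, ?_⟩
        · have := h (j + 1) (Or.inr ⟨j, hj, rfl⟩)
          simpa using this
        · simpa using h 0 (Or.inl rfl)
    rw [hset, hp]
    have hcard : (insert 0 (s.image (· + 1))).card = s.card + 1 := by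
      rw [Finset.card_insert_of_notMem (by simp), Finset.card_image_of_injective _
        (fun a c h => by omega)]
    rw [hcard, pow_succ, ← mul_assoc, mul_comm (2 : ℝ≥0∞), mul_assoc,
      ENNReal.mul_inv_cancel two_ne_zero ENNReal.ofNat_ne_top, mul_one]
  have huniq := coin_unique hνcoin hp
  have hA' := congrArg (fun m : Measure (ℕ → Bool) => m A) huniq
  rw [hν_apply hA] at hA'
  rw [← hA', ← mul_assoc, ENNReal.inv_mul_cancel two_ne_zero ENNReal.ofNat_ne_top, one_mul]

/-! ### Images and their measurability -/

lemma imageA_eq (E : Set ℝ) :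
    (fun x => gold * x) '' E = (fun x => gold⁻¹ * x) ⁻¹' E := by
  ext x
  simp only [Set.mem_image, Set.mem_preimage]
  constructor
  · rintro ⟨y, hy, rfl⟩
    rwa [← mul_assoc, mul_comm gold⁻¹, gold_mul_inv, one_mul]
  · intro h
    exact ⟨gold⁻¹ * x, h, by rw [← mul_assoc, gold_mul_inv, one_mul]⟩

lemma imageB_eq (E : Set ℝ) :
    (fun x => gold * x - gold⁻¹) '' E = (fun x => gold⁻¹ * (x + gold⁻¹)) ⁻¹' E := by
  ext x
  simp only [Set.mem_image, Set.mem_preimage]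
  constructor
  · rintro ⟨y, hy, rfl⟩
    have h : gold⁻¹ * (gold * y - gold⁻¹ + gold⁻¹) = y := by
      rw [sub_add_cancel, ← mul_assoc, mul_comm gold⁻¹, gold_mul_inv, one_mul]
    rwa [h]
  · intro h
    refine ⟨gold⁻¹ * (x + gold⁻¹), h, ?_⟩
    rw [← mul_assoc, gold_mul_inv, one_mul]
    ring

lemma measurable_imageA {E : Set ℝ} (hE : MeasurableSet E) :
    MeasurableSet ((fun x => gold * x) '' E) := by
  rw [imageA_eq]
  exact (measurable_const_mul gold⁻¹) hE

lemma measurable_imageB {E : Set ℝ} (hE : MeasurableSet E) :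
    MeasurableSet ((fun x => gold * x - gold⁻¹) '' E) := by
  rw [imageB_eq]
  exact (((measurable_id.add_const gold⁻¹).const_mul gold⁻¹)) hE

lemma erdos_apply (p : Measure (ℕ → Bool)) {E : Set ℝ} (hE : MeasurableSet E) :
    erdosOf p E = p (piMap ⁻¹' E) :=
  Measure.map_apply measurable_piMap hE

/-! ### The master self-similarity identity -/

lemma erdos_master (p : Measure (ℕ → Bool)) (hp : IsCoinMeasure p)
    (E : Set ℝ) (hE : MeasurableSet E) :
    erdosOf p E = 2⁻¹ * erdosOf p ((fun x => gold * x) '' E)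
      + 2⁻¹ * erdosOf p ((fun x => gold * x - gold⁻¹) '' E) := by
  set A : Set (ℕ → Bool) := piMap ⁻¹' ((fun x => gold * x) '' E) with hAdef
  set B : Set (ℕ → Bool) := piMap ⁻¹' ((fun x => gold * x - gold⁻¹) '' E) with hBdef
  have hAm : MeasurableSet A := measurable_piMap (measurable_imageA hE)
  have hBm : MeasurableSet B := measurable_piMap (measurable_imageB hE)
  have injA : Function.Injective (fun x : ℝ => gold * x) :=
    fun a b h => by dsimp at h; exact mul_left_cancel₀ (ne_of_gt gold_pos') h
  have injB : Function.Injective (fun x : ℝ => gold * x - gold⁻¹) := by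
    intro a b h
    dsimp at h
    exact mul_left_cancel₀ (ne_of_gt gold_pos') (by linarith)
  have hsplit : piMap ⁻¹' E
      = (shift ⁻¹' A ∩ {ε | ε 0 = false}) ∪ (shift ⁻¹' B ∩ {ε | ε 0 = true}) := by
    ext ε
    simp only [Set.mem_preimage, Set.mem_union, Set.mem_inter_iff, Set.mem_setOf_eq,
      hAdef, hBdef]
    have hs := piMap_shift ε
    cases h0 : ε 0 with
    | false =>
      rw [h0] at hs
      simp only [Bool.false_eq_true, if_false, zero_add] at hs
      have h : piMap (shift ε) = gold * piMap ε := hs.symm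
      simp only [h, Bool.false_eq_true, and_true, and_false, or_false, not_false_eq_true]
      rw [injA.mem_set_image]
    | true =>
      rw [h0] at hs
      simp only [if_true] at hs
      have h : piMap (shift ε) = gold * piMap ε - gold⁻¹ := by linarith
      simp only [h, and_true, and_false, false_or, Bool.true_eq_false]
      rw [show gold * piMap ε - gold⁻¹ = (fun x => gold * x - gold⁻¹) (piMap ε) from rfl,
        injB.mem_set_image]
  have hdisj : Disjoint (shift ⁻¹' A ∩ {ε | ε 0 = false}) (shift ⁻¹' B ∩ {ε | ε 0 = true}) := by
    rw [Set.disjoint_left]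
    rintro ε ⟨-, h1⟩ ⟨-, h2⟩
    simp only [Set.mem_setOf_eq] at h1 h2
    rw [h1] at h2
    exact Bool.false_ne_true h2
  rw [erdos_apply p hE, hsplit, measure_union hdisj
    ((measurable_shift hBm).inter (measurable_eval0 true)),
    coin_shift hp false hAm, coin_shift hp true hBm,
    erdos_apply p (measurable_imageA hE), erdos_apply p (measurable_imageB hE)]

/-! ### Null sets -/

lemma erdos_neg (p : Measure (ℕ → Bool)) {S : Set ℝ} (hS : S ⊆ Set.Iio 0) :
    erdosOf p S = 0 := by
  refine measure_mono_null hS ?_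
  rw [erdos_apply p measurableSet_Iio]
  convert measure_empty (μ := p)
  ext ε
  simp only [Set.mem_preimage, Set.mem_Iio, Set.mem_empty_iff_false, iff_false, not_lt]
  exact piMap_nonneg ε

lemma erdos_ge_one (p : Measure (ℕ → Bool)) (hp : IsCoinMeasure p) {S : Set ℝ}
    (hS : S ⊆ Set.Ici 1) : erdosOf p S = 0 := by
  refine measure_mono_null hS ?_
  rw [erdos_apply p measurableSet_Ici]
  have hsub2 : ∀ n : ℕ, piMap ⁻¹' (Set.Ici 1) ⊆ {ε | ∀ i ∈ Finset.range n, ε i = true} := by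
    intro n ε hε i _
    by_contra h
    have hfalse : ε i = false := by
      cases hεi : ε i
      · rfl
      · exact absurd hεi h
    exact absurd (Set.mem_Ici.1 hε) (not_le.2 (piMap_lt_one ε i hfalse))
  have hle : ∀ n : ℕ, p (piMap ⁻¹' (Set.Ici 1)) ≤ 2⁻¹ ^ n := by
    intro n
    calc p (piMap ⁻¹' (Set.Ici 1)) ≤ p {ε | ∀ i ∈ Finset.range n, ε i = true} :=
          measure_mono (hsub2 n)
      _ = 2⁻¹ ^ n := by
          have := hp (Finset.range n) (fun _ => true)
          rwa [Finset.card_range] at this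
  have htend : Tendsto (fun n : ℕ => (2⁻¹ : ℝ≥0∞) ^ n) atTop (𝓝 0) :=
    ENNReal.tendsto_pow_atTop_nhds_zero_of_lt_one
      (ENNReal.inv_lt_one.2 ENNReal.one_lt_two)
  exact le_antisymm (ge_of_tendsto' htend hle) zero_le

/-- Self-similarity of the Erdős measure: for every Borel set `E`,
`μ E = (1/2) μ(λE)` on `[0, λ⁻²)`, `μ E = (1/2)(μ(λE) + μ(λE - λ⁻¹))` on `[λ⁻², λ⁻¹)`,
and `μ E = (1/2) μ(λE - λ⁻¹)` on `[λ⁻¹, 1]`. -/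
theorem erdos_self_similar (p : Measure (ℕ → Bool)) (hp : IsCoinMeasure p)
    (E : Set ℝ) (hE : MeasurableSet E) :
    (E ⊆ Set.Ico 0 (gold⁻¹ ^ 2) →
      erdosOf p E = 2⁻¹ * erdosOf p ((fun x => gold * x) '' E)) ∧
    (E ⊆ Set.Ico (gold⁻¹ ^ 2) gold⁻¹ →
      erdosOf p E = 2⁻¹ * (erdosOf p ((fun x => gold * x) '' E)
        + erdosOf p ((fun x => gold * x - gold⁻¹) '' E))) ∧
    (E ⊆ Set.Icc gold⁻¹ 1 →
      erdosOf p E = 2⁻¹ * erdosOf p ((fun x => gold * x - gold⁻¹) '' E)) := by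
  refine ⟨fun hsub => ?_, fun _ => ?_, fun hsub => ?_⟩
  · have hnull : erdosOf p ((fun x => gold * x - gold⁻¹) '' E) = 0 := by
      refine erdos_neg p ?_
      rintro x ⟨y, hy, rfl⟩
      have hy' := hsub hy
      rw [Set.mem_Ico] at hy'
      have : gold * y < gold * gold⁻¹ ^ 2 := by
        exact mul_lt_mul_of_pos_left hy'.2 gold_pos'
      rw [gold_mul_inv_sq] at this
      simp only [Set.mem_Iio]
      linarith
    rw [erdos_master p hp E hE, hnull, mul_zero, add_zero]
  · rw [erdos_master p hp E hE, mul_add]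
  · have hnull : erdosOf p ((fun x => gold * x) '' E) = 0 := by
      refine erdos_ge_one p hp ?_
      rintro x ⟨y, hy, rfl⟩
      have hy' := hsub hy
      rw [Set.mem_Icc] at hy'
      have : gold * gold⁻¹ ≤ gold * y := mul_le_mul_of_nonneg_left hy'.1 gold_pos'.le
      rw [gold_mul_inv] at this
      exact this
    rw [erdos_master p hp E hE, hnull, mul_zero, zero_add]
end

section
/- For every n ≥ 3 and every integer k, the counting function f_n satisfies the recurrence: f_n(k) = f_{n−1}(k) for 0 ≤ k ≤ F_n − 1; f_n(k) = f_{n−1}(k) + f_{n−1}(k − F_n) for F_n ≤ k ≤ F_{n+1} − 2; and f_n(k) = f_{n−1}(k − F_n) for F_{n+1} − 1 ≤ k ≤ F_{n+2} − 2. -/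
/-- Fibonacci numbers with the convention `F 1 = 1`, `F 2 = 2`. -/
def fibF (n : ℕ) : ℕ := Nat.fib (n + 1)

/-- `countRep n k` is the number of tuples `(ε_1,…,ε_n) ∈ {0,1}^n` with
`k = Σ_{j=1}^n ε_j F_j`. -/
def countRep (n k : ℕ) : ℕ :=
  (Finset.univ.filter fun ε : Fin n → Bool =>
    (∑ j : Fin n, if ε j then fibF (j + 1) else 0) = k).card

lemma sum_fibF (m : ℕ) : (∑ j : Fin m, fibF (↑j + 1)) + 2 = fibF (m + 2) := by
  induction m with
  | zero => decide
  | succ m ih =>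
    rw [Fin.sum_univ_castSucc]
    simp only [Fin.coe_castSucc, Fin.val_last]
    have : fibF (m + 1 + 2) = fibF (m + 2) + fibF (m + 1) := by
      simp [fibF, Nat.fib_add_two]; ring
    omega

lemma sum_le (m : ℕ) (ε : Fin m → Bool) :
    (∑ j : Fin m, if ε j then fibF (j + 1) else 0) ≤ fibF (m + 2) - 2 := by
  have h1 : (∑ j : Fin m, if ε j then fibF (j + 1) else 0) ≤ ∑ j : Fin m, fibF (↑j + 1) :=
    Finset.sum_le_sum fun j _ => by split <;> simp
  have h2 := sum_fibF m
  omega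

lemma countRep_eq_zero {m k : ℕ} (h : fibF (m + 2) - 2 < k) : countRep m k = 0 := by
  rw [countRep, Finset.card_eq_zero, Finset.filter_eq_empty_iff]
  intro ε _
  have := sum_le m ε
  omega

lemma countRep_succ (m k : ℕ) :
    countRep (m + 1) k = countRep m k +
      (if fibF (m + 1) ≤ k then countRep m (k - fibF (m + 1)) else 0) := by
  have key : ∀ (b : Bool) (ε : Fin m → Bool),
      (∑ j : Fin (m+1), if Fin.snoc (α := fun _ => Bool) ε b j = true then fibF (j + 1) else 0)
        = (∑ j : Fin m, if ε j then fibF (j + 1) else 0) + (if b then fibF (m+1) else 0) := by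
    intro b ε
    rw [Fin.sum_univ_castSucc]
    simp [Fin.snoc_castSucc, Fin.snoc_last]
  rw [countRep, Finset.card_filter]
  rw [← (Fin.snocEquiv (fun _ => Bool)).sum_comp]
  rw [Fintype.sum_prod_type]
  simp only [Fin.snocEquiv_apply, key]
  rw [Fintype.sum_bool]
  have hfalse : (∑ ε : Fin m → Bool,
      if ((∑ j : Fin m, if ε j then fibF (j + 1) else 0) + (if false then fibF (m+1) else 0)) = k then 1 else 0)
      = countRep m k := by
    rw [countRep, Finset.card_filter]
    simp
  have htrue : (∑ ε : Fin m → Bool,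
      if ((∑ j : Fin m, if ε j then fibF (j + 1) else 0) + (if true then fibF (m+1) else 0)) = k then 1 else 0)
      = (if fibF (m + 1) ≤ k then countRep m (k - fibF (m + 1)) else 0) := by
    by_cases h : fibF (m + 1) ≤ k
    · rw [if_pos h, countRep, Finset.card_filter]
      apply Finset.sum_congr rfl
      intro ε _
      congr 1
      simp only [if_true, eq_iff_iff]
      generalize (∑ j : Fin m, if ε j = true then fibF (↑j + 1) else 0) = S
      clear key hfalse
      omega
    · rw [if_neg h]
      apply Finset.sum_eq_zero
      intro ε _
      rw [if_neg]
      simp only [if_true]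
      generalize (∑ j : Fin m, if ε j = true then fibF (↑j + 1) else 0) = S
      clear key hfalse
      omega
  rw [hfalse, htrue, add_comm]

/-- The recurrence for the counting function `f_n`. -/
theorem countRep_recurrence (n : ℕ) (hn : 3 ≤ n) (k : ℕ) :
    (k ≤ fibF n - 1 → countRep n k = countRep (n - 1) k) ∧
    (fibF n ≤ k → k ≤ fibF (n + 1) - 2 →
      countRep n k = countRep (n - 1) k + countRep (n - 1) (k - fibF n)) ∧
    (fibF (n + 1) - 1 ≤ k → k ≤ fibF (n + 2) - 2 →
      countRep n k = countRep (n - 1) (k - fibF n)) := by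
  obtain ⟨m, rfl⟩ : ∃ m, n = m + 1 := ⟨n - 1, by omega⟩
  simp only [Nat.add_sub_cancel]
  have hsplit := countRep_succ m k
  have e1 : fibF (m + 1 + 1) = fibF m + fibF (m + 1) := Nat.fib_add_two
  have e2 : fibF (m + 1 + 2) = fibF (m + 1) + fibF (m + 1 + 1) := Nat.fib_add_two
  have hA : 2 ≤ fibF m := by
    calc 2 = Nat.fib 3 := rfl
    _ ≤ Nat.fib (m + 1) := Nat.fib_mono (by omega)
  have hmono : fibF m ≤ fibF (m + 1) := Nat.fib_mono (by omega)
  have e0 : fibF (m + 2) = fibF (m + 1 + 1) := rfl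
  refine ⟨?_, ?_, ?_⟩
  · intro hk
    rw [hsplit, if_neg (by omega), add_zero]
  · intro h1 _
    rw [hsplit, if_pos h1]
  · intro h1 _
    rw [hsplit, if_pos (by omega), countRep_eq_zero (show fibF (m + 2) - 2 < k by omega),
      zero_add]
end

section
/- For a real number ξ, the distance from ξλⁿ to the nearest integer tends to 0 as n → +∞ if and only if there exist integers m, n with ξ = (m + nλ)/5 and 2n − m ≡ 0 (mod 5). In particular the set 𝒢 = {ξ ∈ ℝ : ‖ξλⁿ‖ → 0} is an additive subgroup of ℝ isomorphic to ℤ². -/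
open Filter Topology

/-- The distance from `x` to the nearest integer: `‖x‖ = min({x}, 1 − {x})`. -/
noncomputable def distNearInt (x : ℝ) : ℝ := min (Int.fract x) (1 - Int.fract x)

open Real goldenRatio

section Aux

lemma distNearInt_eq (x : ℝ) : distNearInt x = |x - round x| := (abs_sub_round_eq_min x).symm

lemma distNearInt_nonneg (x : ℝ) : 0 ≤ distNearInt x := by rw [distNearInt_eq]; positivity

lemma distNearInt_le (x : ℝ) (k : ℤ) : distNearInt x ≤ |x - k| := by
  rw [distNearInt_eq]; exact round_le x k

lemma dist_add_le_aux (x y : ℝ) : distNearInt (x + y) ≤ distNearInt x + |y| := by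
  refine le_trans (distNearInt_le (x + y) (round x)) ?_
  rw [distNearInt_eq]
  calc |x + y - round x| = |(x - round x) + y| := by ring_nf
  _ ≤ |x - round x| + |y| := abs_add_le _ _

lemma dvd_of_dist_lt_aux (c : ℤ) (h : distNearInt ((c:ℝ)/5) < 1/5) : (5:ℤ) ∣ c := by
  rw [distNearInt_eq] at h
  set r := round ((c:ℝ)/5) with hr
  by_contra hnd
  have h2 : (1:ℤ) ≤ |c - 5*r| := Int.one_le_abs (fun hcon => hnd ⟨r, by omega⟩)
  have h3 : (1:ℝ) ≤ |(c:ℝ) - 5*r| := by exact_mod_cast h2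
  have h4 : |(c:ℝ)/5 - r| = |(c:ℝ) - 5*r|/5 := by
    rw [show (c:ℝ)/5 - r = ((c:ℝ) - 5*r)/5 by ring, abs_div,
      abs_of_pos (by norm_num : (0:ℝ) < 5)]
  rw [h4] at h
  linarith

lemma two_step_aux {P : ℕ → Prop} (h0 : P 0) (h1 : P 1)
    (h : ∀ n, P n → P (n+1) → P (n+2)) : ∀ n, P n := by
  have key : ∀ n, P n ∧ P (n+1) := by
    intro n
    induction n with
    | zero => exact ⟨h0, h1⟩
    | succ k ih => exact ⟨ih.2, h k ih.1 ih.2⟩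
  exact fun n => (key n).1

/-- Lucas numbers. -/
def luc : ℕ → ℤ
  | 0 => 2
  | 1 => 1
  | n+2 => luc (n+1) + luc n

lemma gold_pow_rec_aux (n : ℕ) :
    goldenRatio ^ (n+2) = goldenRatio ^ (n+1) + goldenRatio ^ n := by
  linear_combination (goldenRatio ^ n) * goldenRatio_sq

lemma goldConj_pow_rec_aux (n : ℕ) :
    goldenConj ^ (n+2) = goldenConj ^ (n+1) + goldenConj ^ n := by
  linear_combination (goldenConj ^ n) * goldenConj_sq

lemma luc_golden_aux : ∀ n, (luc n : ℝ) = goldenRatio ^ n + goldenConj ^ n := by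
  apply two_step_aux
  · norm_num [luc]
  · simp only [luc, pow_one, Int.cast_one]
    linear_combination -goldenRatio_add_goldenConj
  · intro n h1 h2
    rw [show luc (n+2) = luc (n+1) + luc n from rfl, gold_pow_rec_aux, goldConj_pow_rec_aux]
    push_cast
    linarith

lemma T_rec_aux (m n : ℤ) (k : ℕ) :
    m * luc (k+2) + n * luc (k+3)
      = (m * luc (k+1) + n * luc (k+2)) + (m * luc k + n * luc (k+1)) := by
  have e3 : luc (k+3) = luc (k+2) + luc (k+1) := rfl
  have e2 : luc (k+2) = luc (k+1) + luc k := rfl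
  rw [e3, e2]
  ring

lemma luc_combo_aux (m n : ℤ) (h : (2 * n - m) % 5 = 0) :
    ∀ k, (5:ℤ) ∣ m * luc k + n * luc (k+1) := by
  apply two_step_aux
  · show (5:ℤ) ∣ m * 2 + n * 1; omega
  · show (5:ℤ) ∣ m * 1 + n * 3; omega
  · intro k h1 h2
    rw [T_rec_aux]
    exact dvd_add h2 h1

lemma luc_combo_rev_aux (m n : ℤ) (K : ℕ)
    (h : ∀ k, K ≤ k → (5:ℤ) ∣ m * luc k + n * luc (k+1)) : (2 * n - m) % 5 = 0 := by
  have key : ∀ i, (5:ℤ) ∣ m * luc (K - i) + n * luc (K - i + 1) ∧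
      (5:ℤ) ∣ m * luc (K - i + 1) + n * luc (K - i + 2) := by
    intro i
    induction i with
    | zero =>
      refine ⟨h K (by omega), ?_⟩
      have := h (K + 1) (by omega)
      simpa using this
    | succ i ih =>
      rcases le_or_gt K i with hKi | hKi
      · have e1 : K - (i + 1) = K - i := by omega
        rw [e1]; exact ih
      · have e1 : K - (i + 1) + 1 = K - i := by omega
        have e2 : K - (i + 1) + 2 = K - i + 1 := by omega
        refine ⟨?_, ?_⟩
        · have hr := T_rec_aux m n (K - (i+1))
          rw [show K - (i+1) + 3 = K - i + 2 by omega, e1, e2] at hr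
          have heq : m * luc (K - (i+1)) + n * luc (K - (i+1) + 1) =
              (m * luc (K - i + 1) + n * luc (K - i + 2))
                - (m * luc (K - i) + n * luc (K - i + 1)) := by
            rw [e1]; linarith [hr]
          rw [heq]
          exact dvd_sub ih.2 ih.1
        · rw [e1, e2]; exact ih.1
  have h0 := (key K).1
  simp only [Nat.sub_self] at h0
  have : (5:ℤ) ∣ m * 2 + n * 1 := h0
  omega

lemma key_identity_aux (m n : ℤ) (k : ℕ) :
    ((m:ℝ) + n * goldenRatio)/5 * goldenRatio ^ k
      = ((m * luc k + n * luc (k+1) : ℤ) : ℝ)/5 - ((m + n * goldenConj) * goldenConj ^ k)/5 := by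
  have hc : ((m * luc k + n * luc (k+1) : ℤ) : ℝ)
      = m * (goldenRatio^k + goldenConj^k) + n * (goldenRatio^(k+1) + goldenConj^(k+1)) := by
    push_cast [luc_golden_aux]; ring
  rw [hc]; ring

lemma abs_goldConj_lt_one_aux : |goldenConj| < 1 :=
  abs_lt.mpr ⟨neg_one_lt_goldenConj, goldenConj_neg.trans one_pos⟩

lemma conj_tendsto_aux (c : ℝ) :
    Tendsto (fun k : ℕ => c * |goldenConj| ^ k) atTop (nhds 0) := by
  have := tendsto_pow_atTop_nhds_zero_of_lt_one (abs_nonneg goldenConj) abs_goldConj_lt_one_aux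
  simpa using this.const_mul c

/-- Easy direction. -/
lemma tendsto_of_form_aux (m n : ℤ) (h : (2*n-m) % 5 = 0) :
    Tendsto (fun k : ℕ => distNearInt (((m:ℝ) + n * goldenRatio)/5 * goldenRatio ^ k))
      atTop (nhds 0) := by
  apply squeeze_zero (g := fun k => (|(m:ℝ) + n*goldenConj|/5) * |goldenConj| ^ k)
    (fun k => distNearInt_nonneg _)
  · intro k
    obtain ⟨c, hc⟩ := luc_combo_aux m n h k
    have h5c : ((m * luc k + n * luc (k+1) : ℤ) : ℝ) = 5 * c := by
      exact_mod_cast congrArg Int.cast hc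
    have hx : ((m:ℝ) + n * goldenRatio)/5 * goldenRatio ^ k - c
        = -(((m:ℝ) + n * goldenConj) * goldenConj ^ k)/5 := by
      rw [key_identity_aux, h5c]; ring
    refine le_trans (distNearInt_le _ c) (le_of_eq ?_)
    rw [hx, abs_div, abs_neg, abs_mul, abs_pow]
    norm_num; ring
  · exact conj_tendsto_aux _

def InZphi (x : ℝ) : Prop := ∃ m n : ℤ, x = (m : ℝ) + (n : ℝ) * goldenRatio

lemma InZphi.mul {x y : ℝ} (hx : InZphi x) (hy : InZphi y) : InZphi (x * y) := by
  obtain ⟨a, b, rfl⟩ := hx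
  obtain ⟨c, d, rfl⟩ := hy
  refine ⟨a*c + b*d, a*d + b*c + b*d, ?_⟩
  push_cast
  linear_combination (b:ℝ) * (d:ℝ) * goldenRatio_sq

lemma InZphi.pow {x : ℝ} (hx : InZphi x) : ∀ K : ℕ, InZphi (x ^ K) := by
  intro K
  induction K with
  | zero => exact ⟨1, 0, by norm_num⟩
  | succ i ih => rw [pow_succ]; exact ih.mul hx

/-- Hard direction, step A: the limit forces `ξ ∈ (ℤ + ℤφ)/5`. -/
lemma exists_form_aux (ξ : ℝ)
    (h : Tendsto (fun k : ℕ => distNearInt (ξ * goldenRatio ^ k)) atTop (nhds 0)) :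
    ∃ m n : ℤ, ξ = ((m:ℝ) + (n:ℝ) * goldenRatio) / 5 := by
  set a : ℕ → ℤ := fun k => round (ξ * goldenRatio ^ k) with ha
  set ε : ℕ → ℝ := fun k => ξ * goldenRatio ^ k - a k with hεdef
  have hε0 : Tendsto ε atTop (nhds 0) := by
    rw [tendsto_zero_iff_abs_tendsto_zero]
    have heq : (abs ∘ ε) = fun k => distNearInt (ξ * goldenRatio ^ k) := by
      funext k; simp only [Function.comp_apply, distNearInt_eq]; rfl
    rw [heq]; exact h
  have hφrec : ∀ k : ℕ, ξ * goldenRatio ^ (k+2) = ξ * goldenRatio ^ (k+1) + ξ * goldenRatio ^ k :=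
    fun k => by linear_combination ξ * (goldenRatio ^ k) * goldenRatio_sq
  have haε : ∀ k, (a k : ℝ) = ξ * goldenRatio ^ k - ε k := fun k => by simp [hεdef]
  have hb : ∀ k, ((a (k+2) - a (k+1) - a k : ℤ) : ℝ) = ε (k+1) + ε k - ε (k+2) := by
    intro k
    push_cast
    rw [haε, haε, haε]
    linarith [hφrec k]
  have hbt : Tendsto (fun k => ((a (k+2) - a (k+1) - a k : ℤ) : ℝ)) atTop (nhds 0) := by
    simp only [hb]
    have h1 := hε0.comp (tendsto_add_atTop_nat 1)
    have h2 := hε0.comp (tendsto_add_atTop_nat 2)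
    have := (h1.add hε0).sub h2
    simpa using this
  obtain ⟨K, hK⟩ := Metric.tendsto_atTop.mp hbt 1 one_pos
  have hrec : ∀ k, K ≤ k → a (k+2) = a (k+1) + a k := by
    intro k hk
    have h1 := hK k hk
    rw [Real.dist_eq, sub_zero] at h1
    have h2 : |a (k+2) - a (k+1) - a k| < 1 := by exact_mod_cast h1
    have h3 := abs_lt.mp h2
    omega
  have hεrec : ∀ k, K ≤ k → ε (k+2) = ε (k+1) + ε k := by
    intro k hk
    have h2 := hφrec k
    have h3 := hrec k hk
    simp only [hεdef]
    rw [h3]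
    push_cast
    linarith
  set d : ℕ → ℝ := fun k => ε (k+1) - goldenConj * ε k with hd
  have hdrec : ∀ k, K ≤ k → d (k+1) = goldenRatio * d k := by
    intro k hk
    simp only [hd]
    rw [hεrec k hk]
    linear_combination (ε k) * goldenRatio_mul_goldenConj - (ε (k+1)) * goldenRatio_add_goldenConj
  have hdpow : ∀ j, d (K + j) = goldenRatio ^ j * d K := by
    intro j
    induction j with
    | zero => simp
    | succ i ih =>
      rw [show K + (i+1) = (K+i)+1 by ring, hdrec (K+i) (by omega), ih]; ring
  have hd0 : Tendsto d atTop (nhds 0) := by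
    have h1 := hε0.comp (tendsto_add_atTop_nat 1)
    have h2 := hε0.const_mul goldenConj
    have := h1.sub h2
    simpa [hd] using this
  have hdK : d K = 0 := by
    by_contra hne
    have hpos : 0 < |d K| := abs_pos.mpr hne
    have hle : ∀ j : ℕ, |d K| ≤ |d (K + j)| := by
      intro j
      rw [hdpow, abs_mul, abs_pow, abs_of_pos goldenRatio_pos]
      nlinarith [one_le_pow₀ one_lt_goldenRatio.le (n := j), abs_nonneg (d K)]
    have hlim : Tendsto (fun j => |d (K + j)|) atTop (nhds 0) := by
      have := ((hd0.comp (tendsto_add_atTop_nat K)).abs)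
      simpa [abs_zero, Function.comp, add_comm] using this
    have := ge_of_tendsto hlim (Filter.Eventually.of_forall hle)
    linarith
  have hεK : ε (K+1) = goldenConj * ε K := by
    have hh : d K = ε (K+1) - goldenConj * ε K := rfl
    rw [hh] at hdK; linarith
  have hsolve : ξ * goldenRatio ^ K * (goldenRatio - goldenConj)
      = (a (K+1) : ℝ) - goldenConj * (a K : ℝ) := by
    have e1 : ξ * goldenRatio ^ (K+1) = (a (K+1) : ℝ) + ε (K+1) := by
      rw [haε]; ring
    have e0 : ξ * goldenRatio ^ K = (a K : ℝ) + ε K := by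
      rw [haε]; ring
    have hh : ξ * goldenRatio ^ (K+1) - goldenConj * (ξ * goldenRatio ^ K)
        = (a (K+1) : ℝ) - goldenConj * (a K : ℝ) := by
      rw [e1, e0, hεK]; ring
    rw [← hh, pow_succ]; ring
  set R : ℝ := (a (K+1) : ℝ) - goldenConj * (a K : ℝ) with hR
  have hξ : 5 * ξ = R * (goldenRatio - 1) ^ K * (2 * goldenRatio - 1) := by
    have hne : goldenRatio ^ K * (goldenRatio - goldenConj) ≠ 0 := by
      have h5 : goldenRatio - goldenConj = Real.sqrt 5 := goldenRatio_sub_goldenConj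
      rw [h5]
      positivity
    apply mul_right_cancel₀ hne
    have hcancel : (goldenRatio - 1) ^ K * goldenRatio ^ K = 1 := by
      rw [← mul_pow]
      have hh : (goldenRatio - 1) * goldenRatio = 1 := by linear_combination goldenRatio_sq
      rw [hh, one_pow]
    have hfive : (2 * goldenRatio - 1) * (goldenRatio - goldenConj) = 5 := by
      have h5 : goldenRatio - goldenConj = Real.sqrt 5 := goldenRatio_sub_goldenConj
      have h2 : 2 * goldenRatio - 1 = Real.sqrt 5 := by unfold goldenRatio; ring
      rw [h2, h5]
      exact Real.mul_self_sqrt (by norm_num)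
    have lhs : 5 * ξ * (goldenRatio ^ K * (goldenRatio - goldenConj)) = 5 * R := by
      rw [← hsolve]; ring
    have rhs : R * (goldenRatio - 1) ^ K * (2 * goldenRatio - 1)
        * (goldenRatio ^ K * (goldenRatio - goldenConj)) = 5 * R := by
      rw [show R * (goldenRatio - 1) ^ K * (2 * goldenRatio - 1)
          * (goldenRatio ^ K * (goldenRatio - goldenConj))
          = R * ((goldenRatio - 1) ^ K * goldenRatio ^ K)
            * ((2 * goldenRatio - 1) * (goldenRatio - goldenConj)) by ring, hcancel, hfive]
      ring
    exact lhs.trans rhs.symm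
  have hgc : goldenConj = 1 - goldenRatio := one_sub_goldenConj.symm
  have hZ : InZphi (5 * ξ) := by
    rw [hξ]
    refine (InZphi.mul (InZphi.mul ⟨a (K+1) - a K, a K, ?_⟩
      (InZphi.pow ⟨-1, 1, by push_cast; ring⟩ K)) ⟨-1, 2, by push_cast; ring⟩)
    rw [hR, hgc]; push_cast; ring
  obtain ⟨m, n, hmn⟩ := hZ
  exact ⟨m, n, by linarith⟩

/-- Hard direction, step B: given the form, the limit forces the congruence. -/
lemma cong_of_tendsto_aux (m n : ℤ)
    (h : Tendsto (fun k : ℕ => distNearInt (((m:ℝ) + n * goldenRatio)/5 * goldenRatio ^ k))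
      atTop (nhds 0)) : (2 * n - m) % 5 = 0 := by
  -- distNearInt (T k / 5) ≤ distNearInt (ξ φ^k) + |δ k| → 0
  have hbound : ∀ k : ℕ, distNearInt (((m * luc k + n * luc (k+1) : ℤ) : ℝ)/5)
      ≤ distNearInt (((m:ℝ) + n * goldenRatio)/5 * goldenRatio ^ k)
        + (|(m:ℝ) + n * goldenConj|/5) * |goldenConj| ^ k := by
    intro k
    have hid : ((m * luc k + n * luc (k+1) : ℤ) : ℝ)/5
        = ((m:ℝ) + n * goldenRatio)/5 * goldenRatio ^ k
          + ((m + n * goldenConj) * goldenConj ^ k)/5 := by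
      rw [key_identity_aux]; ring
    rw [hid]
    refine le_trans (dist_add_le_aux _ _) ?_
    gcongr
    rw [abs_div, abs_mul, abs_pow, abs_of_pos (by norm_num : (0:ℝ) < 5)]
    exact le_of_eq (by ring)
  have hlim : Tendsto (fun k : ℕ => distNearInt (((m:ℝ) + n * goldenRatio)/5 * goldenRatio ^ k)
      + (|(m:ℝ) + n * goldenConj|/5) * |goldenConj| ^ k) atTop (nhds 0) := by
    have := h.add (conj_tendsto_aux (|(m:ℝ) + n*goldenConj|/5))
    simpa using this
  have hsq : Tendsto (fun k : ℕ => distNearInt (((m * luc k + n * luc (k+1) : ℤ) : ℝ)/5))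
      atTop (nhds 0) :=
    squeeze_zero (fun k => distNearInt_nonneg _) hbound hlim
  obtain ⟨K, hK⟩ := Metric.tendsto_atTop.mp hsq (1/5) (by norm_num)
  refine luc_combo_rev_aux m n K (fun k hk => ?_)
  apply dvd_of_dist_lt_aux
  have := hK k hk
  rw [Real.dist_eq, sub_zero, abs_of_nonneg (distNearInt_nonneg _)] at this
  exact this

lemma irr5_aux : Irrational (Real.sqrt 5) := (Nat.prime_five).irrational_sqrt

noncomputable def gmap : ℤ × ℤ →+ ℝ :=
  AddMonoidHom.mk' (fun p => (p.1 : ℝ) * ((2 + goldenRatio)/5) + p.2)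
    (by intro p q; simp only [Prod.fst_add, Prod.snd_add]; push_cast; ring)

lemma gmap_apply (p : ℤ × ℤ) : gmap p = (p.1 : ℝ) * ((2 + goldenRatio)/5) + p.2 := rfl

lemma gmap_inj : Function.Injective gmap := by
  rw [injective_iff_map_eq_zero]
  rintro ⟨n, t⟩ hp
  rw [gmap_apply] at hp
  simp only at hp
  have hn : n = 0 := by
    by_contra hn0
    have heq : (n:ℝ) * Real.sqrt 5 = ((-10*t - 5*n : ℤ) : ℝ) := by
      push_cast
      unfold goldenRatio at hp
      linear_combination 10 * hp
    exact absurd heq ((irr5_aux.intCast_mul hn0).ne_int _)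
  subst hn
  have ht : (t : ℝ) = 0 := by simpa using hp
  have ht0 : t = 0 := by exact_mod_cast ht
  subst ht0; rfl

end Aux

/-- `‖ξ λⁿ‖ → 0` iff `ξ = (m + nλ)/5` with `2n − m ≡ 0 (mod 5)`; in particular
`𝒢 = {ξ : ‖ξ λⁿ‖ → 0}` is an additive subgroup of `ℝ` isomorphic to `ℤ²`. -/
theorem pisot_group_characterization :
    (∀ ξ : ℝ,
      Tendsto (fun n : ℕ => distNearInt (ξ * gold ^ n)) atTop (nhds 0) ↔
        ∃ m n : ℤ, ξ = ((m : ℝ) + (n : ℝ) * gold) / 5 ∧ (2 * n - m) % 5 = 0) ∧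
    ∃ G : AddSubgroup ℝ,
      (G : Set ℝ) =
        {ξ : ℝ | Tendsto (fun n : ℕ => distNearInt (ξ * gold ^ n)) atTop (nhds 0)} ∧
      Nonempty (G ≃+ ℤ × ℤ) := by
  have hgold : gold = goldenRatio := rfl
  have main : ∀ ξ : ℝ,
      Tendsto (fun n : ℕ => distNearInt (ξ * gold ^ n)) atTop (nhds 0) ↔
        ∃ m n : ℤ, ξ = ((m : ℝ) + (n : ℝ) * gold) / 5 ∧ (2 * n - m) % 5 = 0 := by
    intro ξ
    rw [hgold]
    constructor
    · intro h
      obtain ⟨m, n, hmn⟩ := exists_form_aux ξ h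
      refine ⟨m, n, hmn, ?_⟩
      apply cong_of_tendsto_aux m n
      have : (fun k : ℕ => distNearInt (((m:ℝ) + n * goldenRatio)/5 * goldenRatio ^ k))
          = fun k : ℕ => distNearInt (ξ * goldenRatio ^ k) := by
        funext k; rw [hmn]
      rw [this]; exact h
    · rintro ⟨m, n, rfl, hcong⟩
      exact tendsto_of_form_aux m n hcong
  refine ⟨main, AddMonoidHom.range gmap, ?_, ⟨(AddMonoidHom.ofInjective gmap_inj).symm⟩⟩
  ext ξ
  rw [SetLike.mem_coe, AddMonoidHom.mem_range, Set.mem_setOf_eq, main ξ]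
  simp only [hgold]
  constructor
  · rintro ⟨⟨n, t⟩, rfl⟩
    refine ⟨2*n + 5*t, n, ?_, by omega⟩
    rw [gmap_apply]
    push_cast
    ring
  · rintro ⟨m, n, rfl, hcong⟩
    set t : ℤ := (2*n - m)/5 with htdef
    have ht : 2*n - m = 5*t := by omega
    refine ⟨(n, -t), ?_⟩
    rw [gmap_apply]
    have hm : (m : ℝ) = 2*n - 5*t := by exact_mod_cast congrArg Int.cast (by omega : m = 2*n - 5*t)
    push_cast [hm]
    ring
end

section
/- The measure ν satisfies ν((0, λ⁻²)) = 4/9 and ν((λ⁻², λ⁻¹)) = ν((λ⁻¹, 1)) = 5/18. -/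
open MeasureTheory Filter Topology
open scoped ENNReal

/-- The measure ν, defined piecewise from the Erdős measure:
`ν E = (2/3)μ(E) + (1/3)μ(E+λ⁻²) + (1/6)μ(E+λ⁻¹)` for `E ⊆ [0,λ⁻²)`,
`ν E = (2/3)μ(E) + (1/3)μ(E+λ⁻²)` for `E ⊆ [λ⁻²,λ⁻¹)`,
`ν E = (1/2)μ(E) + (1/3)μ(E−λ⁻¹)` for `E ⊆ [λ⁻¹,1]`,
and by countable additivity in general. -/
noncomputable def nuOf (p : Measure (ℕ → Bool)) : Measure ℝ :=
  ((2 / 3 : ℝ≥0∞) • erdosOf p + (3⁻¹ : ℝ≥0∞) • (erdosOf p).map (fun x => x - gold⁻¹ ^ 2)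
      + (6⁻¹ : ℝ≥0∞) • (erdosOf p).map (fun x => x - gold⁻¹)).restrict
        (Set.Ico 0 (gold⁻¹ ^ 2))
    + ((2 / 3 : ℝ≥0∞) • erdosOf p
        + (3⁻¹ : ℝ≥0∞) • (erdosOf p).map (fun x => x - gold⁻¹ ^ 2)).restrict
        (Set.Ico (gold⁻¹ ^ 2) gold⁻¹)
    + ((2⁻¹ : ℝ≥0∞) • erdosOf p + (3⁻¹ : ℝ≥0∞) • (erdosOf p).map (fun x => x + gold⁻¹)).restrict
        (Set.Icc gold⁻¹ 1)

namespace NuAux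

noncomputable def g : ℝ := gold⁻¹
lemma g_def : g = gold⁻¹ := rfl

lemma sqrt5_lt : Real.sqrt 5 < 3 := by
  nlinarith [Real.sq_sqrt (by norm_num : (5:ℝ) ≥ 0).le, Real.sqrt_nonneg 5]

lemma sqrt5_gt : 2 < Real.sqrt 5 := by
  nlinarith [Real.sq_sqrt (by norm_num : (0:ℝ) ≤ 5), Real.sqrt_nonneg 5]

lemma gold_gt_one : 1 < gold := by
  unfold gold; nlinarith [sqrt5_gt]

lemma gold_sq : gold ^ 2 = gold + 1 := by
  unfold gold
  have h : Real.sqrt 5 ^ 2 = 5 := Real.sq_sqrt (by norm_num)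
  ring_nf
  nlinarith [h]

lemma g_pos : 0 < g := inv_pos.mpr (lt_trans one_pos gold_gt_one)
lemma g_lt_one : g < 1 := inv_lt_one_of_one_lt₀ gold_gt_one
lemma g_half : 1/2 < g := by
  have h2 : gold < 2 := by unfold gold; nlinarith [sqrt5_lt]
  rw [g, one_div]
  exact inv_strictAnti₀ (by unfold gold; nlinarith [sqrt5_gt]) h2
lemma g_sq : g ^ 2 = 1 - g := by
  have hg : gold ≠ 0 := ne_of_gt (lt_trans one_pos gold_gt_one)
  have := gold_sq
  rw [g_def]; field_simp
  nlinarith [this]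

noncomputable def term (ε : ℕ → Bool) (k : ℕ) : ℝ := if ε k then g ^ (k+2) else 0

lemma piMap_eq (ε : ℕ → Bool) : piMap ε = ∑' k, term ε k := rfl

lemma term_nonneg (ε : ℕ → Bool) (k : ℕ) : 0 ≤ term ε k := by
  unfold term; split
  · exact pow_nonneg g_pos.le _
  · exact le_refl _

lemma term_le (ε : ℕ → Bool) (k : ℕ) : term ε k ≤ g ^ (k+2) := by
  unfold term; split
  · exact le_refl _
  · exact pow_nonneg g_pos.le _

lemma summable_geom_shift (n : ℕ) : Summable (fun k : ℕ => g ^ (k + n)) := by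
  simpa [pow_add, mul_comm] using
    (summable_geometric_of_lt_one g_pos.le g_lt_one).mul_right (g ^ n)

lemma summable_term (ε : ℕ → Bool) : Summable (term ε) :=
  Summable.of_nonneg_of_le (term_nonneg ε) (term_le ε) (summable_geom_shift 2)

lemma tsum_geom_shift (n : ℕ) : ∑' k : ℕ, g ^ (k + n + 2) = g ^ n := by
  have h1 : ∑' k : ℕ, g ^ (k + (n+2)) = (∑' k : ℕ, g ^ k) * g ^ (n+2) := by
    simp [pow_add, tsum_mul_right]
  have h2 : ∑' k : ℕ, (g:ℝ) ^ k = (1 - g)⁻¹ := tsum_geometric_of_lt_one g_pos.le g_lt_one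
  have h3 : (1 - g) = g ^ 2 := (g_sq).symm
  have hne : g ≠ 0 := ne_of_gt g_pos
  calc ∑' k : ℕ, g ^ (k + n + 2) = ∑' k : ℕ, g ^ (k + (n+2)) := by
        exact tsum_congr fun k => by rw [Nat.add_assoc]
    _ = (1-g)⁻¹ * g ^ (n+2) := by rw [h1, h2, mul_comm]
    _ = g ^ n := by
        rw [h3, show g ^ (n+2) = g^2 * g^n by ring, ← mul_assoc,
          inv_mul_cancel₀ (by positivity : (g:ℝ)^2 ≠ 0), one_mul]

noncomputable def T (ε : ℕ → Bool) (n : ℕ) : ℝ := ∑' k, term ε (k + n)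

lemma summable_term_shift (ε : ℕ → Bool) (n : ℕ) : Summable (fun k => term ε (k + n)) :=
  (summable_nat_add_iff n).2 (summable_term ε)

lemma S_split (ε : ℕ → Bool) (n : ℕ) :
    piMap ε = (∑ i ∈ Finset.range n, term ε i) + T ε n := by
  rw [piMap_eq]
  exact (Summable.sum_add_tsum_nat_add n (summable_term ε)).symm

lemma T_nonneg (ε : ℕ → Bool) (n : ℕ) : 0 ≤ T ε n :=
  tsum_nonneg (fun k => term_nonneg ε _)

lemma T_le (ε : ℕ → Bool) (n : ℕ) : T ε n ≤ g ^ n := by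
  rw [← tsum_geom_shift n]
  exact Summable.tsum_le_tsum (fun k => term_le ε _) (summable_term_shift ε n)
    (by simpa [Nat.add_assoc] using summable_geom_shift (n+2))

lemma T_ge (ε : ℕ → Bool) (n j : ℕ) (h : ε (j + n) = true) : g ^ (j + n + 2) ≤ T ε n := by
  have := Summable.le_tsum (summable_term_shift ε n) j (fun k _ => term_nonneg ε _)
  simpa [term, h, T] using this

lemma T_split (ε : ℕ → Bool) (n m : ℕ) :
    T ε n = (∑ k ∈ Finset.range m, term ε (k + n)) + T ε (n + m) := by
  unfold T
  rw [← Summable.sum_add_tsum_nat_add m (summable_term_shift ε n)]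
  congr 1
  apply tsum_congr; intro k; congr 1; omega

lemma sum_geom_range (n m : ℕ) :
    ∑ k ∈ Finset.range m, g ^ (k + n + 2) = g ^ n - g ^ (n + m) := by
  induction m with
  | zero => simp
  | succ m ih =>
      have h := g_sq
      rw [Finset.sum_range_succ, ih,
        show g ^ (m + n + 2) = g ^ (n+m) * g^2 by ring,
        show g ^ (n + (m+1)) = g ^ (n+m) * g by ring, h]
      ring

lemma T_lt (ε : ℕ → Bool) (n j : ℕ) (h : ε (j + n) = false) :
    T ε n ≤ g ^ n - g ^ (j + n + 2) := by
  have hsplit := T_split ε n (j+1)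
  have hsum : ∑ k ∈ Finset.range (j+1), term ε (k + n)
      ≤ (∑ k ∈ Finset.range (j+1), g ^ (k + n + 2)) - g ^ (j + n + 2) := by
    rw [Finset.sum_range_succ, Finset.sum_range_succ]
    have : term ε (j + n) = 0 := by simp [term, h]
    rw [this]
    have : ∀ k ∈ Finset.range j, term ε (k+n) ≤ g ^ (k+n+2) := fun k _ => term_le ε _
    have h2 := Finset.sum_le_sum this
    linarith
  have hgeo : ∑ k ∈ Finset.range (j+1), g ^ (k + n + 2) = g ^ n - g ^ (n + (j+1)) :=
    sum_geom_range n (j+1)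
  have htail : T ε (n + (j+1)) ≤ g ^ (n + (j+1)) := T_le ε _
  have := g_sq
  calc T ε n ≤ (g ^ n - g ^ (n + (j+1)) - g ^ (j+n+2)) + g ^ (n + (j+1)) := by
        rw [hsplit]; rw [hgeo] at hsum; linarith
    _ = g ^ n - g ^ (j+n+2) := by ring


def pat : ℕ → Bool := fun i => decide (i % 2 = 1)

lemma pat_even (m : ℕ) : pat (2*m) = false := by simp [pat, Nat.mul_mod_right]
lemma pat_odd (m : ℕ) : pat (2*m+1) = true := by simp [pat, Nat.add_mod, Nat.mul_mod_right]

/-- sum over a pattern prefix -/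
lemma pat_prefix_sum (ε : ℕ → Bool) (m : ℕ) (hpre : ∀ i < 2*m, ε i = pat i) :
    ∑ i ∈ Finset.range (2*m), term ε i = g^2 - g^(2*m+2) := by
  induction m with
  | zero => simp
  | succ m ih =>
      have h2 : 2*(m+1) = (2*m) + 1 + 1 := by ring
      rw [h2, Finset.sum_range_succ, Finset.sum_range_succ]
      have he : ε (2*m) = false := by rw [hpre _ (by omega)]; exact pat_even m
      have ho : ε (2*m+1) = true := by rw [hpre _ (by omega)]; exact pat_odd m
      rw [ih (fun i hi => hpre i (by omega))]
      simp only [term, he, ho]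
      norm_num
      have h := g_sq
      rw [show g ^ (2*m+1+1+2) = g^(2*m+2) * g^2 by ring,
        show g ^ (2*m+1+2) = g^(2*m+2) * g by ring, h]
      ring

/-- S > g² on even-first-deviation with a later one -/
lemma S_up (ε : ℕ → Bool) (m : ℕ) (hpre : ∀ i < 2*m, ε i = pat i)
    (hdev : ε (2*m) = true) (hone : ∃ j, ε (j + (2*m+1)) = true) :
    g^2 < piMap ε := by
  obtain ⟨j, hj⟩ := hone
  have hs := S_split ε (2*m+1)
  rw [Finset.sum_range_succ, pat_prefix_sum ε m hpre] at hs
  have ht : term ε (2*m) = g^(2*m+2) := by simp [term, hdev]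
  have hT : g ^ (j + (2*m+1) + 2) ≤ T ε (2*m+1) := T_ge ε _ j hj
  have hp : (0:ℝ) < g ^ (j + (2*m+1) + 2) := pow_pos g_pos _
  rw [hs, ht]
  linarith

/-- S < g² on odd-first-deviation with a later zero -/
lemma S_down (ε : ℕ → Bool) (m : ℕ) (hpre : ∀ i < 2*m+1, ε i = pat i)
    (hdev : ε (2*m+1) = false) (hzero : ∃ j, ε (j + (2*m+2)) = false) :
    piMap ε < g^2 := by
  obtain ⟨j, hj⟩ := hzero
  have hs := S_split ε (2*m+2)
  have he : ε (2*m) = false := by rw [hpre _ (by omega)]; exact pat_even m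
  have hsum : ∑ i ∈ Finset.range (2*m+2), term ε i = g^2 - g^(2*m+2) := by
    rw [show 2*m+2 = 2*m+1+1 by ring, Finset.sum_range_succ, Finset.sum_range_succ,
      pat_prefix_sum ε m (fun i hi => hpre i (by omega))]
    simp [term, he, hdev]
  have hT : T ε (2*m+2) ≤ g ^ (2*m+2) - g ^ (j + (2*m+2) + 2) := T_lt ε _ j hj
  have hp : (0:ℝ) < g ^ (j + (2*m+2) + 2) := pow_pos g_pos _
  rw [hs, hsum]
  linarith

lemma S_nonneg (ε : ℕ → Bool) : 0 ≤ piMap ε := by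
  have := S_split ε 0; simp at this; rw [this]; exact T_nonneg ε 0

lemma S_le_one (ε : ℕ → Bool) : piMap ε ≤ 1 := by
  have := S_split ε 0; simp at this; rw [this]
  simpa using T_le ε 0

lemma S_pos (ε : ℕ → Bool) (j : ℕ) (h : ε j = true) : 0 < piMap ε := by
  have := S_split ε 0; simp at this; rw [this]
  have := T_ge ε 0 j (by simpa using h)
  have hp : (0:ℝ) < g ^ (j + 0 + 2) := pow_pos g_pos _
  linarith

lemma S_lt_one (ε : ℕ → Bool) (j : ℕ) (h : ε j = false) : piMap ε < 1 := by
  have hs := S_split ε 0; simp at hs; rw [hs]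
  have := T_lt ε 0 j (by simpa using h)
  have hp : (0:ℝ) < g ^ (j + 0 + 2) := pow_pos g_pos _
  simp at this
  linarith

/-- recursion -/
def shift (ε : ℕ → Bool) : ℕ → Bool := fun k => ε (k+1)

lemma S_rec (ε : ℕ → Bool) :
    piMap ε = (if ε 0 then g^2 else 0) + g * piMap (shift ε) := by
  have hs := S_split ε 1
  rw [Finset.sum_range_one] at hs
  have ht : T ε 1 = g * piMap (shift ε) := by
    unfold T piMap shift
    rw [← tsum_mul_left]
    apply tsum_congr; intro k
    simp only [term]
    have hgk : (g:ℝ)^(k+1+2) = g * gold⁻¹^(k+2) := by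
      rw [show (g:ℝ) = gold⁻¹ from rfl]; ring
    by_cases h : ε (k+1) = true
    · simp [h, hgk]
    · simp [h]
  have ht0 : term ε 0 = if ε 0 then g^2 else 0 := by simp [term]
  rw [hs, ht, ht0]

lemma enn_eq {a b : ℝ≥0∞} (ha : a ≠ ⊤) (hb : b ≠ ⊤) (h : a.toReal = b.toReal) : a = b :=
  (ENNReal.toReal_eq_toReal_iff' ha hb).1 h

lemma sub_quarter : (1 : ℝ≥0∞) - 4⁻¹ = 3/4 := by
  refine ENNReal.sub_eq_of_eq_add (by simp) ?_
  refine enn_eq (by simp) (by simp [ENNReal.add_ne_top, ENNReal.div_eq_top]) ?_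
  rw [ENNReal.toReal_add (by simp [ENNReal.div_eq_top]) (by simp)]
  simp [ENNReal.toReal_div]
  norm_num

-- the three sums
lemma sumU : ∑' m : ℕ, ((2:ℝ≥0∞)⁻¹)^(2*m+1) = 2/3 := by
  have h1 : ∀ m : ℕ, ((2:ℝ≥0∞)⁻¹)^(2*m+1) = 2⁻¹ * (4⁻¹)^m := by
    intro m
    rw [pow_add, pow_mul, pow_one, mul_comm]
    congr 2
    rw [← ENNReal.inv_pow]
    norm_num
  rw [tsum_congr h1, ENNReal.tsum_mul_left, ENNReal.tsum_geometric, sub_quarter]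
  refine enn_eq (by simp [ENNReal.mul_ne_top, ENNReal.div_eq_top]) (by simp [ENNReal.div_eq_top]) ?_
  rw [ENNReal.toReal_mul, ENNReal.toReal_inv, ENNReal.toReal_inv]
  simp [ENNReal.toReal_div]
  norm_num

lemma sumV : ∑' m : ℕ, ((2:ℝ≥0∞)⁻¹)^(2*m+2) = 1/3 := by
  have h1 : ∀ m : ℕ, ((2:ℝ≥0∞)⁻¹)^(2*m+2) = 4⁻¹ * (4⁻¹)^m := by
    intro m
    rw [pow_add, pow_mul, mul_comm]
    congr 1 <;> rw [← ENNReal.inv_pow] <;> norm_num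
  rw [tsum_congr h1, ENNReal.tsum_mul_left, ENNReal.tsum_geometric, sub_quarter]
  refine enn_eq (by simp [ENNReal.mul_ne_top, ENNReal.div_eq_top]) (by simp [ENNReal.div_eq_top]) ?_
  rw [ENNReal.toReal_mul, ENNReal.toReal_inv, ENNReal.toReal_inv]
  simp [ENNReal.toReal_div]
  norm_num

lemma sumW : ∑' m : ℕ, ((2:ℝ≥0∞)⁻¹)^(2*m+3) = 1/6 := by
  have h1 : ∀ m : ℕ, ((2:ℝ≥0∞)⁻¹)^(2*m+3) = 8⁻¹ * (4⁻¹)^m := by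
    intro m
    rw [pow_add, pow_mul, mul_comm]
    congr 1 <;> rw [← ENNReal.inv_pow] <;> norm_num
  rw [tsum_congr h1, ENNReal.tsum_mul_left, ENNReal.tsum_geometric, sub_quarter]
  refine enn_eq (by simp [ENNReal.mul_ne_top, ENNReal.div_eq_top]) (by simp [ENNReal.div_eq_top]) ?_
  rw [ENNReal.toReal_mul, ENNReal.toReal_inv, ENNReal.toReal_inv]
  simp [ENNReal.toReal_div]
  norm_num

lemma oneSubU : (1:ℝ≥0∞) - 2/3 = 1/3 := by
  refine ENNReal.sub_eq_of_eq_add (by simp [ENNReal.div_eq_top]) ?_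
  refine enn_eq (by simp) (by simp [ENNReal.add_ne_top, ENNReal.div_eq_top]) ?_
  rw [ENNReal.toReal_add (by simp [ENNReal.div_eq_top]) (by simp [ENNReal.div_eq_top])]
  simp [ENNReal.toReal_div]; norm_num

lemma UsubV : (2:ℝ≥0∞)/3 - 1/3 = 1/3 := by
  refine ENNReal.sub_eq_of_eq_add (by simp [ENNReal.div_eq_top]) ?_
  refine enn_eq (by simp [ENNReal.div_eq_top]) (by simp [ENNReal.add_ne_top, ENNReal.div_eq_top]) ?_
  rw [ENNReal.toReal_add (by simp [ENNReal.div_eq_top]) (by simp [ENNReal.div_eq_top])]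
  simp [ENNReal.toReal_div]; norm_num

lemma UsubW : (2:ℝ≥0∞)/3 - 1/6 = 1/2 := by
  refine ENNReal.sub_eq_of_eq_add (by simp [ENNReal.div_eq_top]) ?_
  refine enn_eq (by simp [ENNReal.div_eq_top]) (by simp [ENNReal.add_ne_top, ENNReal.div_eq_top]) ?_
  rw [ENNReal.toReal_add (by simp [ENNReal.div_eq_top]) (by simp [ENNReal.div_eq_top])]
  simp [ENNReal.toReal_div]; norm_num

lemma nu1arith : (2/3 : ℝ≥0∞) * (1/3) + 3⁻¹ * (1/2) + 6⁻¹ * (1/3) = 4/9 := by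
  refine enn_eq ?_ (by simp [ENNReal.div_eq_top]) ?_
  · refine ENNReal.add_ne_top.2 ⟨ENNReal.add_ne_top.2 ⟨?_, ?_⟩, ?_⟩ <;>
      exact ENNReal.mul_ne_top (by simp [ENNReal.div_eq_top]) (by simp [ENNReal.div_eq_top])
  · rw [ENNReal.toReal_add, ENNReal.toReal_add] <;>
      simp [ENNReal.toReal_mul, ENNReal.toReal_div, ENNReal.mul_ne_top, ENNReal.div_eq_top]
    norm_num

lemma nu2arith : (2/3 : ℝ≥0∞) * (1/3) + 3⁻¹ * (1/6) = 5/18 := by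
  refine enn_eq ?_ (by simp [ENNReal.div_eq_top]) ?_
  · refine ENNReal.add_ne_top.2 ⟨?_, ?_⟩ <;>
      exact ENNReal.mul_ne_top (by simp [ENNReal.div_eq_top]) (by simp [ENNReal.div_eq_top])
  · rw [ENNReal.toReal_add] <;>
      simp [ENNReal.toReal_mul, ENNReal.toReal_div, ENNReal.mul_ne_top, ENNReal.div_eq_top]
    norm_num

lemma nu3arith : (2⁻¹ : ℝ≥0∞) * (1/3) + 3⁻¹ * (1/3) = 5/18 := by
  refine enn_eq ?_ (by simp [ENNReal.div_eq_top]) ?_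
  · refine ENNReal.add_ne_top.2 ⟨?_, ?_⟩ <;>
      exact ENNReal.mul_ne_top (by simp [ENNReal.div_eq_top]) (by simp [ENNReal.div_eq_top])
  · rw [ENNReal.toReal_add] <;>
      simp [ENNReal.toReal_mul, ENNReal.toReal_div, ENNReal.mul_ne_top, ENNReal.div_eq_top]
    norm_num

def Gset : Set (ℕ → Bool) :=
  {ε | (∀ N, ∃ k, N ≤ k ∧ ε k = true) ∧ (∀ N, ∃ k, N ≤ k ∧ ε k = false)}

def C (m : ℕ) : Set (ℕ → Bool) := {ε | (∀ i < 2*m, ε i = pat i) ∧ ε (2*m) = true}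
def U : Set (ℕ → Bool) := ⋃ m, C m
def V : Set (ℕ → Bool) := {ε | ε 0 = true ∧ shift ε ∈ U}
def W : Set (ℕ → Bool) := {ε | ε 0 = true ∧ shift ε ∈ V}
def tailDet (f : ℕ → Bool) (K : ℕ) : Set (ℕ → Bool) := {ε | ∀ k, ε (k + K) = f k}
def Nset : Set (ℕ → Bool) := Gsetᶜ ∪ tailDet pat 0 ∪ tailDet pat 1 ∪ tailDet pat 2

lemma G_shift {ε} (h : ε ∈ Gset) : shift ε ∈ Gset := by
  obtain ⟨h1, h0⟩ := h
  constructor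
  · intro N; obtain ⟨k, hk, hb⟩ := h1 (N+1)
    exact ⟨k-1, by omega, by unfold shift; rwa [show k-1+1 = k by omega]⟩
  · intro N; obtain ⟨k, hk, hb⟩ := h0 (N+1)
    exact ⟨k-1, by omega, by unfold shift; rwa [show k-1+1 = k by omega]⟩

lemma G_ex {ε} (h : ε ∈ Gset) (n : ℕ) (b : Bool) : ∃ j, ε (j + n) = b := by
  rcases b with _ | _
  · obtain ⟨k, hk, hb⟩ := h.2 n; exact ⟨k-n, by rwa [show k-n+n = k by omega]⟩
  · obtain ⟨k, hk, hb⟩ := h.1 n; exact ⟨k-n, by rwa [show k-n+n = k by omega]⟩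

lemma U_gt {ε} (hG : ε ∈ Gset) (hU : ε ∈ U) : g^2 < piMap ε := by
  obtain ⟨m, hpre, hdev⟩ := Set.mem_iUnion.1 hU
  exact S_up ε m hpre hdev (G_ex hG _ true)

lemma dichot {ε} (hG : ε ∈ Gset) (h0 : ε ∉ tailDet pat 0) :
    (ε ∈ U ∧ g^2 < piMap ε) ∨ (ε ∉ U ∧ piMap ε < g^2) := by
  have hex : ∃ n, ¬ (ε n = pat n) := by
    by_contra h; push_neg at h
    exact h0 (fun k => h k)
  classical
  let n := Nat.find hex
  have hdev : ¬ (ε n = pat n) := Nat.find_spec hex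
  have hmin : ∀ i < n, ε i = pat i := fun i hi => by
    have := Nat.find_min hex hi; simpa using this
  rcases Nat.even_or_odd n with ⟨m, hm⟩ | ⟨m, hm⟩
  · -- even deviation: n = 2m
    have hn : n = 2*m := by omega
    have ht : ε (2*m) = true := by
      have := hdev; rw [hn, pat_even] at this
      simpa using this
    left
    have hU : ε ∈ U := Set.mem_iUnion.2 ⟨m, fun i hi => hmin i (by omega), ht⟩
    exact ⟨hU, U_gt hG hU⟩
  · -- odd deviation: n = 2m+1
    have hn : n = 2*m+1 := by omega
    have hf : ε (2*m+1) = false := by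
      have := hdev; rw [hn, pat_odd] at this
      simpa using this
    right
    constructor
    · intro hU
      obtain ⟨m', hpre', hdev'⟩ := Set.mem_iUnion.1 hU
      rcases lt_or_ge (2*m') n with h | h
      · have := hmin _ h
        rw [pat_even] at this
        rw [this] at hdev'; simp at hdev'
      · have hne : 2*m' ≠ n := by omega
        have := hpre' n (by omega)
        exact hdev this
    · exact S_down ε m (fun i hi => hmin i (by omega)) hf (G_ex hG _ false)

lemma iffU {ε} (hG : ε ∈ Gset) (h0 : ε ∉ tailDet pat 0) : ε ∈ U ↔ g^2 < piMap ε := by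
  constructor
  · exact U_gt hG
  · intro h
    rcases dichot hG h0 with ⟨hU, _⟩ | ⟨_, hlt⟩
    · exact hU
    · exact absurd h (lt_asymm hlt)

lemma neU {ε} (hG : ε ∈ Gset) (h0 : ε ∉ tailDet pat 0) : ε ∉ U ↔ piMap ε < g^2 := by
  constructor
  · intro h
    rcases dichot hG h0 with ⟨hU, _⟩ | ⟨_, hlt⟩
    · exact absurd hU h
    · exact hlt
  · intro h hU
    exact absurd (U_gt hG hU) (lt_asymm h)

lemma S_pos_G {ε} (hG : ε ∈ Gset) : 0 < piMap ε := by
  obtain ⟨j, hj⟩ := G_ex hG 0 true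
  exact S_pos ε _ hj

lemma S_lt_one_G {ε} (hG : ε ∈ Gset) : piMap ε < 1 := by
  obtain ⟨j, hj⟩ := G_ex hG 0 false
  exact S_lt_one ε _ hj

lemma shift_tailDet {ε : ℕ → Bool} (K : ℕ) (h : ε ∉ tailDet pat (K+1)) :
    shift ε ∉ tailDet pat K := by
  intro hc
  exact h (fun k => by have := hc k; unfold shift at this; rwa [show k + K + 1 = k + (K+1) by omega] at this)

lemma iffV {ε} (hG : ε ∈ Gset) (h1 : ε ∉ tailDet pat 1) :
    (ε ∈ V ↔ g < piMap ε) ∧ (ε ∉ V ↔ piMap ε < g) := by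
  have hGs : shift ε ∈ Gset := G_shift hG
  have hs0 : shift ε ∉ tailDet pat 0 := shift_tailDet 0 h1
  have hrec := S_rec ε
  have hgp := g_pos
  by_cases h : ε 0 = true
  · rw [if_pos h] at hrec
    have key : g < piMap ε ↔ g^2 < piMap (shift ε) := by
      rw [hrec]
      constructor
      · intro hh; nlinarith [g_sq]
      · intro hh; nlinarith [g_sq]
    constructor
    · rw [key]
      constructor
      · intro hv; exact (iffU hGs hs0).1 hv.2
      · intro hh; exact ⟨h, (iffU hGs hs0).2 hh⟩
    · constructor
      · intro hv
        have : shift ε ∉ U := fun hu => hv ⟨h, hu⟩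
        have := (neU hGs hs0).1 this
        rw [hrec]; nlinarith [g_sq]
      · intro hh hv
        have := (iffU hGs hs0).1 hv.2
        rw [hrec] at hh; nlinarith [g_sq]
  · rw [if_neg h] at hrec
    have hlt : piMap ε < g := by
      have h1' := S_lt_one_G hGs
      rw [hrec]; nlinarith
    constructor
    · constructor
      · intro hv; exact absurd hv.1 h
      · intro hh; exact absurd hh (lt_asymm hlt)
    · exact ⟨fun _ => hlt, fun _ hv => h hv.1⟩

lemma iffW {ε} (hG : ε ∈ Gset) (h2 : ε ∉ tailDet pat 2) :
    (ε ∈ W ↔ 2*g^2 < piMap ε) ∧ (ε ∉ W ↔ piMap ε < 2*g^2) := by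
  have hGs : shift ε ∈ Gset := G_shift hG
  have hs1 : shift ε ∉ tailDet pat 1 := shift_tailDet 1 h2
  have hrec := S_rec ε
  have hgp := g_pos
  have hiv := iffV hGs hs1
  by_cases h : ε 0 = true
  · rw [if_pos h] at hrec
    have key : 2*g^2 < piMap ε ↔ g < piMap (shift ε) := by
      rw [hrec]
      constructor
      · intro hh; nlinarith [g_sq]
      · intro hh; nlinarith [g_sq]
    constructor
    · rw [key]
      constructor
      · intro hv; exact hiv.1.1 hv.2
      · intro hh; exact ⟨h, hiv.1.2 hh⟩
    · constructor
      · intro hv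
        have : shift ε ∉ V := fun hu => hv ⟨h, hu⟩
        have := hiv.2.1 this
        rw [hrec]; nlinarith [g_sq]
      · intro hh hv
        have := hiv.1.1 hv.2
        rw [hrec] at hh; nlinarith [g_sq]
  · rw [if_neg h] at hrec
    have hle : piMap (shift ε) ≤ 1 := S_le_one _
    have hlt : piMap ε < 2*g^2 := by
      have hg2 : g < 2*g^2 := by nlinarith [g_sq, g_half]
      rw [hrec]; nlinarith
    constructor
    · constructor
      · intro hv; exact absurd hv.1 h
      · intro hh; exact absurd hh (lt_asymm hlt)
    · exact ⟨fun _ => hlt, fun _ hv => h hv.1⟩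

-- pointwise characterizations of the five interval preimages
lemma notN {ε} (h : ε ∉ Nset) :
    ε ∈ Gset ∧ ε ∉ tailDet pat 0 ∧ ε ∉ tailDet pat 1 ∧ ε ∉ tailDet pat 2 := by
  unfold Nset at h
  simp only [Set.mem_union, not_or, Set.mem_compl_iff, not_not] at h
  exact ⟨h.1.1.1, h.1.1.2, h.1.2, h.2⟩

lemma char1 {ε} (h : ε ∉ Nset) : piMap ε ∈ Set.Ioo 0 (g^2) ↔ ε ∈ Uᶜ := by
  obtain ⟨hG, h0, h1, h2⟩ := notN h
  rw [Set.mem_Ioo, Set.mem_compl_iff, neU hG h0]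
  exact ⟨fun hh => hh.2, fun hh => ⟨S_pos_G hG, hh⟩⟩

lemma char2 {ε} (h : ε ∉ Nset) : piMap ε ∈ Set.Ioo (g^2) g ↔ ε ∈ U \ V := by
  obtain ⟨hG, h0, h1, h2⟩ := notN h
  rw [Set.mem_Ioo, Set.mem_diff, ← iffU hG h0, ← (iffV hG h1).2]

lemma char3 {ε} (h : ε ∉ Nset) : piMap ε ∈ Set.Ioo g 1 ↔ ε ∈ V := by
  obtain ⟨hG, h0, h1, h2⟩ := notN h
  rw [Set.mem_Ioo, ← (iffV hG h1).1]
  exact ⟨fun hh => hh.1, fun hh => ⟨hh, S_lt_one_G hG⟩⟩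

lemma char4 {ε} (h : ε ∉ Nset) : piMap ε ∈ Set.Ioo (g^2) (g^2 + g^2) ↔ ε ∈ U \ W := by
  obtain ⟨hG, h0, h1, h2⟩ := notN h
  rw [Set.mem_Ioo, Set.mem_diff, ← iffU hG h0, show g^2 + g^2 = 2*g^2 by ring, ← (iffW hG h2).2]

lemma char5 {ε} (h : ε ∉ Nset) : piMap ε ∈ Set.Ioo (g^2 + g^2) 1 ↔ ε ∈ W := by
  obtain ⟨hG, h0, h1, h2⟩ := notN h
  rw [Set.mem_Ioo, show g^2 + g^2 = 2*g^2 by ring, ← (iffW hG h2).1]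
  exact ⟨fun hh => hh.1, fun hh => ⟨hh, S_lt_one_G hG⟩⟩

lemma V_sub_U : V ⊆ U := by
  intro ε hv
  exact Set.mem_iUnion.2 ⟨0, by simp, by simpa using hv.1⟩

lemma W_sub_U : W ⊆ U := by
  intro ε hw
  exact Set.mem_iUnion.2 ⟨0, by simp, by simpa using hw.1⟩

----------------- measure layer -----------------

lemma meas_piMap : Measurable piMap := by
  have hpart : ∀ n, Measurable (fun ε => ∑ i ∈ Finset.range n, term ε i) := by
    intro n
    apply Finset.measurable_sum
    intro i _
    exact (measurable_from_top (f := fun b : Bool => if b then g ^ (i+2) else 0)).comp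
      (measurable_pi_apply i)
  apply measurable_of_tendsto_metrizable hpart
  rw [tendsto_pi_nhds]
  intro ε
  exact ((summable_term ε).hasSum.tendsto_sum_nat)

def cylSet (n : ℕ) (b : ℕ → Bool) : Set (ℕ → Bool) := {ε | ∀ i ∈ Finset.range n, ε i = b i}

lemma meas_cylSet (n : ℕ) (b : ℕ → Bool) : MeasurableSet (cylSet n b) := by
  have h : cylSet n b = ⋂ i ∈ Finset.range n, (fun ε : ℕ → Bool => ε i) ⁻¹' {b i} := by
    ext ε; simp [cylSet]
  rw [h]
  exact MeasurableSet.biInter (Finset.range n).countable_toSet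
    (fun i _ => (measurable_pi_apply i) (measurableSet_singleton _))

variable {p : Measure (ℕ → Bool)}

lemma p_cyl (hp : IsCoinMeasure p) (n : ℕ) (b : ℕ → Bool) : p (cylSet n b) = 2⁻¹ ^ n := by
  have := hp (Finset.range n) b
  rw [Finset.card_range] at this
  exact this

lemma p_univ (hp : IsCoinMeasure p) : p Set.univ = 1 := by
  have := hp ∅ (fun _ => true)
  simpa using this

lemma tailDet_null (hp : IsCoinMeasure p) (f : ℕ → Bool) (K : ℕ) : p (tailDet f K) = 0 := by
  have hb : ∀ n : ℕ, p (tailDet f K) ≤ 2⁻¹ ^ n := by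
    intro n
    have hsub : tailDet f K ⊆ {ε | ∀ i ∈ Finset.Ico K (K+n), ε i = f (i - K)} := by
      intro ε hε i hi
      rw [Finset.mem_Ico] at hi
      have := hε (i - K)
      rwa [show i - K + K = i by omega] at this
    calc p (tailDet f K) ≤ p {ε | ∀ i ∈ Finset.Ico K (K+n), ε i = f (i - K)} :=
          measure_mono hsub
      _ = 2⁻¹ ^ n := by rw [hp (Finset.Ico K (K+n)) (fun i => f (i - K))]; congr 1; simp
  have htend : Tendsto (fun n : ℕ => (2:ℝ≥0∞)⁻¹ ^ n) atTop (𝓝 0) :=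
    ENNReal.tendsto_pow_atTop_nhds_zero_of_lt_one
      (by simp [ENNReal.inv_lt_one])
  exact le_antisymm (ge_of_tendsto' htend hb) (zero_le)

lemma Gc_null (hp : IsCoinMeasure p) : p Gsetᶜ = 0 := by
  have hsub : Gsetᶜ ⊆ (⋃ N, tailDet (fun _ => true) N) ∪ ⋃ N, tailDet (fun _ => false) N := by
    intro ε hε
    unfold Gset at hε
    simp only [Set.mem_compl_iff, Set.mem_setOf_eq, not_and_or] at hε
    rcases hε with h | h
    · push_neg at h
      obtain ⟨N, hN⟩ := h
      right
      refine Set.mem_iUnion.2 ⟨N, fun k => ?_⟩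
      have := hN (k + N) (by omega)
      simpa using this
    · push_neg at h
      obtain ⟨N, hN⟩ := h
      left
      refine Set.mem_iUnion.2 ⟨N, fun k => ?_⟩
      have := hN (k + N) (by omega)
      simpa using this
  apply measure_mono_null hsub
  exact measure_union_null (measure_iUnion_null fun N => tailDet_null hp _ N)
    (measure_iUnion_null fun N => tailDet_null hp _ N)

lemma Nset_null (hp : IsCoinMeasure p) : p Nset = 0 := by
  unfold Nset
  refine measure_union_null (measure_union_null (measure_union_null ?_ ?_) ?_) ?_
  · exact Gc_null hp
  all_goals exact tailDet_null hp _ _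

-- cylinder representations
def bU (m : ℕ) : ℕ → Bool := fun i => if i = 2*m then true else pat i
def bcons (b : ℕ → Bool) : ℕ → Bool := fun i => if i = 0 then true else b (i-1)
lemma bcons_zero (b : ℕ → Bool) : bcons b 0 = true := rfl
lemma bcons_succ (b : ℕ → Bool) (j : ℕ) : bcons b (j+1) = b j := by simp [bcons]

lemma C_eq (m : ℕ) : C m = cylSet (2*m+1) (bU m) := by
  ext ε
  constructor
  · rintro ⟨h1, h2⟩ i hi
    rw [Finset.mem_range] at hi
    by_cases h : i = 2*m
    · rw [h, bU, if_pos rfl]; exact h2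
    · rw [bU]; simp only [if_neg h]; exact h1 i (by omega)
  · intro h
    refine ⟨fun i hi => ?_, ?_⟩
    · have := h i (by simp [Finset.mem_range]; omega)
      rwa [bU, if_neg (by omega)] at this
    · have := h (2*m) (by simp [Finset.mem_range])
      rwa [bU, if_pos rfl] at this

lemma lift_cyl (n : ℕ) (b : ℕ → Bool) :
    {ε : ℕ → Bool | ε 0 = true ∧ shift ε ∈ cylSet n b} = cylSet (n+1) (bcons b) := by
  ext ε
  constructor
  · rintro ⟨h0, hs⟩ i hi
    rw [Finset.mem_range] at hi
    match i with
    | 0 => rw [bcons_zero]; exact h0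
    | (j+1) =>
        rw [bcons_succ]
        exact hs j (by simp [Finset.mem_range]; omega)
  · intro h
    refine ⟨?_, fun j hj => ?_⟩
    · have := h 0 (by simp [Finset.mem_range])
      rwa [bcons_zero] at this
    · rw [Finset.mem_range] at hj
      have := h (j+1) (by simp [Finset.mem_range]; omega)
      rwa [bcons_succ] at this

lemma V_eq : V = ⋃ m, cylSet (2*m+2) (bcons (bU m)) := by
  have h1 : V = ⋃ m, {ε : ℕ → Bool | ε 0 = true ∧ shift ε ∈ C m} := by
    ext ε
    simp only [V, U, Set.mem_iUnion, Set.mem_setOf_eq]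
    constructor
    · rintro ⟨h0, m, hm⟩; exact ⟨m, h0, hm⟩
    · rintro ⟨m, h0, hm⟩; exact ⟨h0, m, hm⟩
  rw [h1]
  apply Set.iUnion_congr
  intro m
  rw [C_eq, lift_cyl, show 2*m+1+1 = 2*m+2 from by omega]

lemma W_eq : W = ⋃ m, cylSet (2*m+3) (bcons (bcons (bU m))) := by
  have h1 : W = ⋃ m, {ε : ℕ → Bool | ε 0 = true ∧ shift ε ∈ cylSet (2*m+2) (bcons (bU m))} := by
    ext ε
    simp only [W, V_eq, Set.mem_iUnion, Set.mem_setOf_eq]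
    constructor
    · rintro ⟨h0, m, hm⟩; exact ⟨m, h0, hm⟩
    · rintro ⟨m, h0, hm⟩; exact ⟨h0, m, hm⟩
  rw [h1]
  apply Set.iUnion_congr
  intro m
  rw [lift_cyl, show 2*m+2+1 = 2*m+3 from by omega]

-- membership at key index
lemma bU_at (m : ℕ) : bU m (2*m) = true := by rw [bU, if_pos rfl]
lemma bU_pat {m m' : ℕ} (h : m < m') : bU m' (2*m) = false := by
  rw [bU, if_neg (by omega)]; exact pat_even m

lemma cyl_mem_at {n : ℕ} {b : ℕ → Bool} {ε : ℕ → Bool} (hε : ε ∈ cylSet n b) {i : ℕ}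
    (hi : i < n) : ε i = b i := hε i (by simp [Finset.mem_range, hi])

lemma disjU : Pairwise (Function.onFun Disjoint C) := by
  have key : ∀ {m m'}, m < m' → Disjoint (C m) (C m') := by
    intro m m' h
    rw [Set.disjoint_left]
    intro ε hm hm'
    have h1 : ε (2*m) = true := hm.2
    have h2 : ε (2*m) = pat (2*m) := hm'.1 _ (by omega)
    rw [pat_even m] at h2
    rw [h1] at h2; exact Bool.noConfusion h2
  intro m m' hne
  rcases hne.lt_or_gt with h | h
  · exact key h
  · exact (key h).symm

lemma disjV : Pairwise (Function.onFun Disjoint (fun m => cylSet (2*m+2) (bcons (bU m)))) := by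
  have key : ∀ {m m'}, m < m' →
      Disjoint (cylSet (2*m+2) (bcons (bU m))) (cylSet (2*m'+2) (bcons (bU m'))) := by
    intro m m' h
    rw [Set.disjoint_left]
    intro ε hm hm'
    have h1 : ε (2*m+1) = bcons (bU m) (2*m+1) := cyl_mem_at hm (by omega)
    have h2 : ε (2*m+1) = bcons (bU m') (2*m+1) := cyl_mem_at hm' (by omega)
    rw [bcons_succ, bU_at] at h1
    rw [bcons_succ, bU_pat h] at h2
    rw [h1] at h2; exact Bool.noConfusion h2
  intro m m' hne
  rcases hne.lt_or_gt with h | h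
  · exact key h
  · exact (key h).symm

lemma disjW : Pairwise (Function.onFun Disjoint (fun m => cylSet (2*m+3) (bcons (bcons (bU m))))) := by
  have key : ∀ {m m'}, m < m' →
      Disjoint (cylSet (2*m+3) (bcons (bcons (bU m)))) (cylSet (2*m'+3) (bcons (bcons (bU m')))) := by
    intro m m' h
    rw [Set.disjoint_left]
    intro ε hm hm'
    have h1 : ε (2*m+2) = bcons (bcons (bU m)) (2*m+2) := cyl_mem_at hm (by omega)
    have h2 : ε (2*m+2) = bcons (bcons (bU m')) (2*m+2) := cyl_mem_at hm' (by omega)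
    rw [show 2*m+2 = (2*m+1)+1 from rfl, bcons_succ, bcons_succ, bU_at] at h1
    rw [show 2*m+2 = (2*m+1)+1 from rfl, bcons_succ, bcons_succ, bU_pat h] at h2
    rw [h1] at h2; exact Bool.noConfusion h2
  intro m m' hne
  rcases hne.lt_or_gt with h | h
  · exact key h
  · exact (key h).symm

lemma U_cyl : U = ⋃ m, cylSet (2*m+1) (bU m) := by
  unfold U; exact Set.iUnion_congr (fun m => C_eq m)

lemma measU : MeasurableSet U := by
  rw [U_cyl]; exact MeasurableSet.iUnion (fun m => meas_cylSet _ _)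

lemma measV : MeasurableSet V := by
  rw [V_eq]; exact MeasurableSet.iUnion (fun m => meas_cylSet _ _)

lemma measW : MeasurableSet W := by
  rw [W_eq]; exact MeasurableSet.iUnion (fun m => meas_cylSet _ _)

lemma pU (hp : IsCoinMeasure p) : p U = 2/3 := by
  have hd : Pairwise (Function.onFun Disjoint (fun m => cylSet (2*m+1) (bU m))) := by
    intro m m' hne
    show Disjoint (cylSet (2*m+1) (bU m)) (cylSet (2*m'+1) (bU m'))
    rw [← C_eq, ← C_eq]
    exact disjU hne
  rw [U_cyl, measure_iUnion hd (fun m => meas_cylSet _ _)]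
  rw [tsum_congr (fun m => p_cyl hp (2*m+1) (bU m))]
  exact sumU

lemma pV (hp : IsCoinMeasure p) : p V = 1/3 := by
  rw [V_eq, measure_iUnion disjV (fun m => meas_cylSet _ _),
    tsum_congr (fun m => p_cyl hp (2*m+2) _)]
  exact sumV

lemma pW (hp : IsCoinMeasure p) : p W = 1/6 := by
  rw [W_eq, measure_iUnion disjW (fun m => meas_cylSet _ _),
    tsum_congr (fun m => p_cyl hp (2*m+3) _)]
  exact sumW

lemma aeeq (hp : IsCoinMeasure p) {s t : Set (ℕ → Bool)} (h : ∀ ε ∉ Nset, (ε ∈ s ↔ ε ∈ t)) : s =ᵐ[p] t := by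
  have hsub : {ε | ¬(ε ∈ s ↔ ε ∈ t)} ⊆ Nset := fun ε hε => by
    by_contra hn; exact hε (h ε hn)
  exact Filter.eventuallyEq_set.2 (ae_iff.2 (measure_mono_null hsub (Nset_null hp)))



-- final p-values of the five preimages
lemma p1 {p : Measure (ℕ → Bool)} (hp : IsCoinMeasure p) :
    p (piMap ⁻¹' Set.Ioo 0 (g^2)) = 1/3 := by
  haveI : IsProbabilityMeasure p := ⟨p_univ hp⟩
  have he : (piMap ⁻¹' Set.Ioo 0 (g^2) : Set (ℕ → Bool)) =ᵐ[p] (Uᶜ : Set (ℕ → Bool)) :=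
    aeeq hp (fun ε hε => char1 hε)
  rw [measure_congr he]
  rw [measure_compl measU (measure_ne_top p U), measure_univ, pU hp, oneSubU]

lemma p2 {p : Measure (ℕ → Bool)} (hp : IsCoinMeasure p) :
    p (piMap ⁻¹' Set.Ioo (g^2) g) = 1/3 := by
  haveI : IsProbabilityMeasure p := ⟨p_univ hp⟩
  have he : (piMap ⁻¹' Set.Ioo (g^2) g : Set (ℕ → Bool)) =ᵐ[p] (U \ V : Set (ℕ → Bool)) :=
    aeeq hp (fun ε hε => char2 hε)
  rw [measure_congr he]
  rw [measure_diff V_sub_U measV.nullMeasurableSet (measure_ne_top p V), pU hp, pV hp, UsubV]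

lemma p3 {p : Measure (ℕ → Bool)} (hp : IsCoinMeasure p) :
    p (piMap ⁻¹' Set.Ioo g 1) = 1/3 := by
  have he : (piMap ⁻¹' Set.Ioo g 1 : Set (ℕ → Bool)) =ᵐ[p] V :=
    aeeq hp (fun ε hε => char3 hε)
  rw [measure_congr he]
  exact pV hp

lemma p4 {p : Measure (ℕ → Bool)} (hp : IsCoinMeasure p) :
    p (piMap ⁻¹' Set.Ioo (g^2) (g^2 + g^2)) = 1/2 := by
  haveI : IsProbabilityMeasure p := ⟨p_univ hp⟩
  have he : (piMap ⁻¹' Set.Ioo (g^2) (g^2 + g^2) : Set (ℕ → Bool)) =ᵐ[p] (U \ W : Set (ℕ → Bool)) :=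
    aeeq hp (fun ε hε => char4 hε)
  rw [measure_congr he]
  rw [measure_diff W_sub_U measW.nullMeasurableSet (measure_ne_top p W), pU hp, pW hp, UsubW]

lemma p5 {p : Measure (ℕ → Bool)} (hp : IsCoinMeasure p) :
    p (piMap ⁻¹' Set.Ioo (g^2 + g^2) 1) = 1/6 := by
  have he : (piMap ⁻¹' Set.Ioo (g^2 + g^2) 1 : Set (ℕ → Bool)) =ᵐ[p] W :=
    aeeq hp (fun ε hε => char5 hε)
  rw [measure_congr he]
  exact pW hp

lemma mu_Ioo (p : Measure (ℕ → Bool)) (a b : ℝ) :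
    (p.map piMap) (Set.Ioo a b) = p (piMap ⁻¹' Set.Ioo a b) :=
  MeasureTheory.Measure.map_apply meas_piMap measurableSet_Ioo

-- endpoint inequalities
lemma g2_pos : 0 < g^2 := pow_pos g_pos 2
lemma g2_lt_g : g^2 < g := by nlinarith [g_pos, g_lt_one]
lemma g_add_g2 : g^2 + g = 1 := by nlinarith [g_sq]

-- the five μ-values
lemma mu1 {p : Measure (ℕ → Bool)} (hp : IsCoinMeasure p) :
    (p.map piMap) (Set.Ioo 0 (g^2)) = 1/3 := by rw [mu_Ioo]; exact p1 hp
lemma mu2 {p : Measure (ℕ → Bool)} (hp : IsCoinMeasure p) :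
    (p.map piMap) (Set.Ioo (g^2) g) = 1/3 := by rw [mu_Ioo]; exact p2 hp
lemma mu3 {p : Measure (ℕ → Bool)} (hp : IsCoinMeasure p) :
    (p.map piMap) (Set.Ioo g 1) = 1/3 := by rw [mu_Ioo]; exact p3 hp
lemma mu4 {p : Measure (ℕ → Bool)} (hp : IsCoinMeasure p) :
    (p.map piMap) (Set.Ioo (g^2) (g^2 + g^2)) = 1/2 := by rw [mu_Ioo]; exact p4 hp
lemma mu5 {p : Measure (ℕ → Bool)} (hp : IsCoinMeasure p) :
    (p.map piMap) (Set.Ioo (g^2 + g^2) 1) = 1/6 := by rw [mu_Ioo]; exact p5 hp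

lemma nu1 (p : Measure (ℕ → Bool)) (hp : IsCoinMeasure p) :
    nuOf p (Set.Ioo 0 (g^2)) = 4/9 := by
  unfold nuOf erdosOf
  simp only [← g_def]
  rw [Measure.add_apply, Measure.add_apply,
    Measure.restrict_apply measurableSet_Ioo,
    Measure.restrict_apply measurableSet_Ioo,
    Measure.restrict_apply measurableSet_Ioo]
  have i1 : Set.Ioo 0 (g^2) ∩ Set.Ico 0 (g^2) = Set.Ioo 0 (g^2) := by
    rw [Set.inter_eq_left]; exact Set.Ioo_subset_Ico_self
  have i2 : Set.Ioo 0 (g^2) ∩ Set.Ico (g^2) g = ∅ := by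
    rw [Set.eq_empty_iff_forall_notMem]
    rintro x ⟨⟨_, h2⟩, h3, _⟩; linarith
  have i3 : Set.Ioo 0 (g^2) ∩ Set.Icc g 1 = ∅ := by
    rw [Set.eq_empty_iff_forall_notMem]
    rintro x ⟨⟨_, h2⟩, h3, _⟩
    have := g2_lt_g; linarith
  rw [i1, i2, i3]; simp only [measure_empty, add_zero, zero_add]
  rw [Measure.add_apply, Measure.add_apply, Measure.smul_apply, Measure.smul_apply,
    Measure.smul_apply, smul_eq_mul, smul_eq_mul, smul_eq_mul]
  have m2 : (p.map piMap).map (fun x => x - g^2) (Set.Ioo 0 (g^2)) = 1/2 := by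
    rw [MeasureTheory.Measure.map_apply (by fun_prop) measurableSet_Ioo,
      Set.preimage_sub_const_Ioo, zero_add]
    exact mu4 hp
  have m3 : (p.map piMap).map (fun x => x - g) (Set.Ioo 0 (g^2)) = 1/3 := by
    rw [MeasureTheory.Measure.map_apply (by fun_prop) measurableSet_Ioo,
      Set.preimage_sub_const_Ioo, zero_add, g_add_g2]
    exact mu3 hp
  rw [mu1 hp, m2, m3]
  exact nu1arith

lemma nu2 (p : Measure (ℕ → Bool)) (hp : IsCoinMeasure p) :
    nuOf p (Set.Ioo (g^2) g) = 5/18 := by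
  unfold nuOf erdosOf
  simp only [← g_def]
  rw [Measure.add_apply, Measure.add_apply,
    Measure.restrict_apply measurableSet_Ioo,
    Measure.restrict_apply measurableSet_Ioo,
    Measure.restrict_apply measurableSet_Ioo]
  have i1 : Set.Ioo (g^2) g ∩ Set.Ico 0 (g^2) = ∅ := by
    rw [Set.eq_empty_iff_forall_notMem]
    rintro x ⟨⟨h1, _⟩, _, h4⟩; linarith
  have i2 : Set.Ioo (g^2) g ∩ Set.Ico (g^2) g = Set.Ioo (g^2) g := by
    rw [Set.inter_eq_left]; exact Set.Ioo_subset_Ico_self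
  have i3 : Set.Ioo (g^2) g ∩ Set.Icc g 1 = ∅ := by
    rw [Set.eq_empty_iff_forall_notMem]
    rintro x ⟨⟨_, h2⟩, h3, _⟩; linarith
  rw [i1, i2, i3]; simp only [measure_empty, add_zero, zero_add]
  rw [Measure.add_apply, Measure.smul_apply, Measure.smul_apply, smul_eq_mul, smul_eq_mul]
  have m2 : (p.map piMap).map (fun x => x - g^2) (Set.Ioo (g^2) g) = 1/6 := by
    rw [MeasureTheory.Measure.map_apply (by fun_prop) measurableSet_Ioo,
      Set.preimage_sub_const_Ioo]
    rw [show g + g^2 = 1 by linarith [g_add_g2]]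
    exact mu5 hp
  rw [mu2 hp, m2]
  exact nu2arith

lemma nu3 (p : Measure (ℕ → Bool)) (hp : IsCoinMeasure p) :
    nuOf p (Set.Ioo g 1) = 5/18 := by
  unfold nuOf erdosOf
  simp only [← g_def]
  rw [Measure.add_apply, Measure.add_apply,
    Measure.restrict_apply measurableSet_Ioo,
    Measure.restrict_apply measurableSet_Ioo,
    Measure.restrict_apply measurableSet_Ioo]
  have i1 : Set.Ioo g 1 ∩ Set.Ico 0 (g^2) = ∅ := by
    rw [Set.eq_empty_iff_forall_notMem]
    rintro x ⟨⟨h1, _⟩, _, h4⟩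
    have := g2_lt_g; linarith
  have i2 : Set.Ioo g 1 ∩ Set.Ico (g^2) g = ∅ := by
    rw [Set.eq_empty_iff_forall_notMem]
    rintro x ⟨⟨h1, _⟩, _, h4⟩; linarith
  have i3 : Set.Ioo g 1 ∩ Set.Icc g 1 = Set.Ioo g 1 := by
    rw [Set.inter_eq_left]
    rintro x ⟨h1, h2⟩; exact ⟨le_of_lt h1, le_of_lt h2⟩
  rw [i1, i2, i3]; simp only [measure_empty, add_zero, zero_add]
  rw [Measure.add_apply, Measure.smul_apply, Measure.smul_apply, smul_eq_mul, smul_eq_mul]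
  have m2 : (p.map piMap).map (fun x => x + g) (Set.Ioo g 1) = 1/3 := by
    rw [MeasureTheory.Measure.map_apply (by fun_prop) measurableSet_Ioo,
      Set.preimage_add_const_Ioo, sub_self, ← g_sq]
    exact mu1 hp
  rw [mu3 hp, m2]
  exact nu3arith


end NuAux

/-- `ν((0,λ⁻²)) = 4/9` and `ν((λ⁻²,λ⁻¹)) = ν((λ⁻¹,1)) = 5/18`. -/
theorem nu_values (p : Measure (ℕ → Bool)) (hp : IsCoinMeasure p) :
    nuOf p (Set.Ioo 0 (gold⁻¹ ^ 2)) = 4 / 9 ∧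
    nuOf p (Set.Ioo (gold⁻¹ ^ 2) gold⁻¹) = 5 / 18 ∧
    nuOf p (Set.Ioo gold⁻¹ 1) = 5 / 18 := by
  refine ⟨NuAux.nu1 p hp, NuAux.nu2 p hp, NuAux.nu3 p hp⟩
end

section
/- Let B_1,…,B_k be blocks and let W = B_1⋯B_k be their concatenation. Then every 0-1 word w of length |B_1|+⋯+|B_k| having the same value as W decomposes as a concatenation w = w_1⋯w_k where each w_i has length |B_i| and the same value as B_i. Consequently the cardinality function is blockwise multiplicative: f(B_1⋯B_k) = ∏_{i=1}^k f(B_i). -/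
/-- The value Σ_{j=1}^ℓ w_j λ^{-j} of a 0-1 word `(w_1, …, w_ℓ)`. -/
noncomputable def wordVal : List Bool → ℝ
  | [] => 0
  | b :: t => ((if b then 1 else 0) + wordVal t) / gold

/-- `wordF w` is the number of 0-1 words of the same length as `w` having the same
value as `w`. -/
noncomputable def wordF (w : List Bool) : ℕ :=
  Nat.card {v : List Bool // v.length = w.length ∧ wordVal v = wordVal w}

/-- The block `B(a_1, …, a_t)`: the 0-1 word `1(00)^{a_1}(01)^{a_2}⋯(00)^{a_t}` if `t`
is odd and `1(01)^{a_1}(00)^{a_2}⋯(00)^{a_t}` if `t` is even (`1 = true`, `0 = false`);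
the `i`-th group is `(00)^{a_i}` when `i ≡ t (mod 2)` and `(01)^{a_i}` otherwise. -/
def blockWord (a : List ℕ) : List Bool :=
  true :: (((List.range a.length).map fun i =>
    (List.replicate (a.getD i 0)
      (if (a.length - 1 - i) % 2 = 0 then [false, false] else [false, true])).flatten).flatten)

/-- The finite continued fraction `[a_1, …, a_t] = 1/(a_1 + 1/(a_2 + ⋯ + 1/a_t))`. -/
def cf : List ℕ → ℚ
  | [] => 0
  | a :: t => 1 / ((a : ℚ) + cf t)

/-- `p + q` where `p/q = [a_1, …, a_t]` in lowest terms. -/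
def pqSum (a : List ℕ) : ℕ := (cf a).num.toNat + (cf a).den

namespace WFCB

lemma sqrt5_sq : Real.sqrt 5 ^ 2 = 5 := Real.sq_sqrt (by norm_num)

lemma sqrt5_gt : 2 < Real.sqrt 5 := by
  nlinarith [sqrt5_sq, Real.sqrt_nonneg 5]

lemma sqrt5_lt : Real.sqrt 5 < 3 := by
  nlinarith [sqrt5_sq, Real.sqrt_nonneg 5]

lemma one_lt_gold : 1 < gold := by unfold gold; linarith [sqrt5_gt]

lemma gold_lt_two : gold < 2 := by unfold gold; linarith [sqrt5_lt]

lemma gold_pos : 0 < gold := by linarith [one_lt_gold]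

lemma gold_ne : gold ≠ 0 := ne_of_gt gold_pos

lemma gold_sq : gold ^ 2 = gold + 1 := by
  unfold gold; field_simp; nlinarith [sqrt5_sq]

lemma gold_cube : gold ^ 3 = 2 * gold + 1 := by
  have h := gold_sq
  nlinarith [h]

lemma wordVal_nil : wordVal [] = 0 := rfl

lemma wordVal_cons (b : Bool) (t : List Bool) :
    wordVal (b :: t) = ((if b then 1 else 0) + wordVal t) / gold := rfl

lemma wordVal_nonneg (w : List Bool) : 0 ≤ wordVal w := by
  induction w with
  | nil => exact le_of_eq wordVal_nil.symm
  | cons b t ih =>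
    rw [wordVal_cons]
    apply div_nonneg _ (le_of_lt gold_pos)
    have : (0:ℝ) ≤ if b then 1 else 0 := by split <;> norm_num
    linarith

lemma wordVal_lt (w : List Bool) : wordVal w < gold := by
  induction w with
  | nil => rw [wordVal_nil]; exact gold_pos
  | cons b t ih =>
    rw [wordVal_cons, div_lt_iff₀ gold_pos]
    have hb : (if b then (1:ℝ) else 0) ≤ 1 := by split <;> norm_num
    nlinarith [gold_sq]

lemma wordVal_append (x y : List Bool) :
    wordVal (x ++ y) = wordVal x + gold⁻¹ ^ x.length * wordVal y := by
  induction x with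
  | nil => simp [wordVal_nil]
  | cons b t ih =>
    simp only [List.cons_append, wordVal_cons, ih, List.length_cons, pow_succ]
    field_simp
    ring

lemma step_eq (x r : Bool) (v R : List Bool) :
    gold * (wordVal (x :: v) - wordVal (r :: R)) =
      ((if x then 1 else 0) - (if r then 1 else 0)) + (wordVal v - wordVal R) := by
  rw [wordVal_cons, wordVal_cons]
  field_simp [gold_ne]
  ring

/-- Automaton states at pair boundaries. -/
abbrev S5 (d : ℝ) : Prop := d = 0 ∨ d = 1 ∨ d = -1 ∨ d = -(gold - 1)

/-- States possible at a block boundary. -/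
abbrev S3 (d : ℝ) : Prop := d = 0 ∨ d = 1 ∨ d = -1

lemma S3_S5 {d : ℝ} (h : S3 d) : S5 d := by
  rcases h with h | h | h
  · exact Or.inl h
  · exact Or.inr (Or.inl h)
  · exact Or.inr (Or.inr (Or.inl h))

/-- `pairList ps` is the word obtained by concatenating the pairs `[0, b]` for `b ∈ ps`. -/
def pairList (ps : List Bool) : List Bool := (ps.map fun b => [false, b]).flatten

lemma pairList_nil : pairList [] = [] := rfl

lemma pairList_cons (b : Bool) (tl : List Bool) :
    pairList (b :: tl) = false :: b :: pairList tl := rfl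

lemma pairList_append (xs ys : List Bool) :
    pairList (xs ++ ys) = pairList xs ++ pairList ys := by
  simp [pairList]

lemma pairList_length (ps : List Bool) : (pairList ps).length = 2 * ps.length := by
  induction ps with
  | nil => rfl
  | cons b tl ih => rw [pairList_cons]; simp only [List.length_cons, ih]; omega

/-- Arithmetic core of a one-pair step of the carry automaton. -/
lemma pair_core (b x y : Bool) (v Rest : List Bool) :
    gold ^ 2 * (wordVal (x :: y :: v) - wordVal (false :: b :: Rest)) =
      gold * (if x then 1 else 0) + (if y then 1 else 0) - (if b then 1 else 0) +
        (wordVal v - wordVal Rest) ∧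
    (-gold < gold * (wordVal (x :: y :: v) - wordVal (false :: b :: Rest)) -
        (if x then 1 else 0) ∧
      gold * (wordVal (x :: y :: v) - wordVal (false :: b :: Rest)) -
        (if x then 1 else 0) < gold) := by
  have e1 := step_eq x false (y :: v) (b :: Rest)
  norm_num at e1
  have e2 := step_eq y b v Rest
  refine ⟨by linear_combination gold * e1 + e2, ?_, ?_⟩
  · have h1 := wordVal_nonneg (y :: v); have h2 := wordVal_lt (b :: Rest); linarith
  · have h1 := wordVal_lt (y :: v); have h2 := wordVal_nonneg (b :: Rest); linarith

/-- One `00`-pair step of the carry automaton. -/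
lemma pair_stepFF (x y : Bool) (v Rest : List Bool)
    (hd : S5 (wordVal (x :: y :: v) - wordVal (false :: false :: Rest))) :
    S3 (wordVal v - wordVal Rest) := by
  have hg2 := gold_sq
  have hg3 := gold_cube
  have hg1 := one_lt_gold
  have hg4 := gold_lt_two
  have hb2l : -gold < wordVal v - wordVal Rest := by
    have h1 := wordVal_nonneg v; have h2 := wordVal_lt Rest; linarith
  have hb2r : wordVal v - wordVal Rest < gold := by
    have h1 := wordVal_lt v; have h2 := wordVal_nonneg Rest; linarith
  obtain ⟨key, kb1l, kb1r⟩ := pair_core false x y v Rest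
  rcases hd with h | h | h | h <;> rw [h] at key kb1l kb1r <;> cases x <;> cases y <;>
      norm_num at key <;> norm_num at kb1l <;> norm_num at kb1r <;>
    first
      | (exfalso; linarith [key, kb1l, kb1r, hb2l, hb2r, hg2, hg3, hg1, hg4])
      | (refine Or.inl ?_; linarith [key, hg2, hg3])
      | (refine Or.inr (Or.inl ?_); linarith [key, hg2, hg3])
      | (refine Or.inr (Or.inr ?_); linarith [key, hg2, hg3])

/-- One `01`-pair step of the carry automaton. -/
lemma pair_stepFT (x y : Bool) (v Rest : List Bool)
    (hd : S5 (wordVal (x :: y :: v) - wordVal (false :: true :: Rest))) :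
    S5 (wordVal v - wordVal Rest) := by
  have hg2 := gold_sq
  have hg3 := gold_cube
  have hg1 := one_lt_gold
  have hg4 := gold_lt_two
  have hb2l : -gold < wordVal v - wordVal Rest := by
    have h1 := wordVal_nonneg v; have h2 := wordVal_lt Rest; linarith
  have hb2r : wordVal v - wordVal Rest < gold := by
    have h1 := wordVal_lt v; have h2 := wordVal_nonneg Rest; linarith
  obtain ⟨key, kb1l, kb1r⟩ := pair_core true x y v Rest
  rcases hd with h | h | h | h <;> rw [h] at key kb1l kb1r <;> cases x <;> cases y <;>
      norm_num at key <;> norm_num at kb1l <;> norm_num at kb1r <;>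
    first
      | (exfalso; linarith [key, kb1l, kb1r, hb2l, hb2r, hg2, hg3, hg1, hg4])
      | (refine Or.inl ?_; linarith [key, hg2, hg3])
      | (refine Or.inr (Or.inl ?_); linarith [key, hg2, hg3])
      | (refine Or.inr (Or.inr (Or.inl ?_)); linarith [key, hg2, hg3])
      | (refine Or.inr (Or.inr (Or.inr ?_)); linarith [key, hg2, hg3])

/-- Stepping the dead-end state `-(gold-1)` through a pair: the pair must be `01`
and the state stays `-(gold-1)`. -/
lemma pair_step_neg (b x y : Bool) (v Rest : List Bool)
    (hd : wordVal (x :: y :: v) - wordVal (false :: b :: Rest) = -(gold - 1)) :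
    b = true ∧ wordVal v - wordVal Rest = -(gold - 1) := by
  have hg2 := gold_sq
  have hg3 := gold_cube
  have hg1 := one_lt_gold
  have hg4 := gold_lt_two
  have hb2l : -gold < wordVal v - wordVal Rest := by
    have h1 := wordVal_nonneg v; have h2 := wordVal_lt Rest; linarith
  have hb2r : wordVal v - wordVal Rest < gold := by
    have h1 := wordVal_lt v; have h2 := wordVal_nonneg Rest; linarith
  obtain ⟨key, kb1l, kb1r⟩ := pair_core b x y v Rest
  rw [hd] at key kb1l kb1r
  cases b <;> cases x <;> cases y <;> norm_num at key kb1l kb1r <;>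
    first
      | (refine ⟨rfl, ?_⟩; linarith [key, hg2, hg3])
      | (exfalso; linarith [key, kb1l, kb1r, hb2l, hb2r, hg2, hg3, hg1, hg4])

/-- Walking the automaton through a list of pairs preserves `S5`. -/
lemma pairs_walk : ∀ (ps : List Bool) (v Rest : List Bool),
    v.length = 2 * ps.length + Rest.length →
    S5 (wordVal v - wordVal (pairList ps ++ Rest)) →
    S5 (wordVal (v.drop (2 * ps.length)) - wordVal Rest)
  | [], v, Rest, hlen, hd => by simpa [pairList_nil] using hd
  | p :: tl, v, Rest, hlen, hd => by
    rcases v with - | ⟨x, v⟩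
    · exfalso; simp only [List.length_nil, List.length_cons] at hlen; omega
    rcases v with - | ⟨y, v'⟩
    · exfalso; simp only [List.length_nil, List.length_cons] at hlen; omega
    rw [pairList_cons] at hd
    simp only [List.cons_append] at hd
    have h : S5 (wordVal v' - wordVal (pairList tl ++ Rest)) := by
      cases p
      · exact S3_S5 (pair_stepFF x y v' _ hd)
      · exact pair_stepFT x y v' _ hd
    have hlen' : v'.length = 2 * tl.length + Rest.length := by
      simp only [List.length_cons] at hlen; omega
    have ih := pairs_walk tl v' Rest hlen' h
    have hdrop : (x :: y :: v').drop (2 * (p :: tl).length) = v'.drop (2 * tl.length) := by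
      rw [show 2 * ((p :: tl).length) = 2 * tl.length + 1 + 1 by
        simp only [List.length_cons]; ring]
      rw [List.drop_succ_cons, List.drop_succ_cons]
    rwa [hdrop]

/-- The dead-end state `-(gold-1)` cannot survive a pair list containing a `00` pair. -/
lemma kill : ∀ (ps : List Bool) (v Rest : List Bool), false ∈ ps →
    v.length = 2 * ps.length + Rest.length →
    wordVal v - wordVal (pairList ps ++ Rest) = -(gold - 1) → False
  | [], _, _, hmem, _, _ => by simp at hmem
  | p :: tl, v, Rest, hmem, hlen, hd => by
    rcases v with - | ⟨x, v⟩
    · simp only [List.length_nil, List.length_cons] at hlen; omega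
    rcases v with - | ⟨y, v'⟩
    · simp only [List.length_nil, List.length_cons] at hlen; omega
    rw [pairList_cons] at hd
    simp only [List.cons_append] at hd
    obtain ⟨hb, hd'⟩ := pair_step_neg p x y v' (pairList tl ++ Rest) hd
    subst hb
    have hmem' : false ∈ tl := by simpa using hmem
    have hlen' : v'.length = 2 * tl.length + Rest.length := by
      simp only [List.length_cons] at hlen; omega
    exact kill tl v' Rest hmem' hlen' hd'

/-- Walking through a whole block starting from state `0` lands in `S3`. -/
lemma block_walk (ps' : List Bool) (v Rest : List Bool)
    (hlen : v.length = (1 + 2 * (ps' ++ [false]).length) + Rest.length)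
    (hd : wordVal v - wordVal ((true :: pairList (ps' ++ [false])) ++ Rest) = 0) :
    S3 (wordVal (v.drop (1 + 2 * (ps' ++ [false]).length)) - wordVal Rest) := by
  rcases v with - | ⟨x, v₁⟩
  · exfalso; simp only [List.length_nil, List.length_cons, List.length_append] at hlen; omega
  simp only [List.cons_append] at hd
  have e1 := step_eq x true v₁ (pairList (ps' ++ [false]) ++ Rest)
  rw [hd, mul_zero] at e1
  have hS : S5 (wordVal v₁ - wordVal (pairList (ps' ++ [false]) ++ Rest)) := by
    cases x <;> norm_num at e1
    · right; left; linarith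
    · left; linarith
  rw [pairList_append, List.append_assoc] at hS
  have hpl1 : (pairList [false] ++ Rest).length = 2 + Rest.length := by
    rw [List.length_append, pairList_length]; simp
  have hlenx : v₁.length = 2 * ps'.length + 2 + Rest.length := by
    simp only [List.length_cons, List.length_nil, List.length_append, List.length_singleton] at hlen
    omega
  have hlen₁ : v₁.length = 2 * ps'.length + (pairList [false] ++ Rest).length := by
    rw [hpl1]; omega
  have h2 := pairs_walk ps' v₁ (pairList [false] ++ Rest) hlen₁ hS
  have hlen₂ : (v₁.drop (2 * ps'.length)).length = 2 + Rest.length := by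
    rw [List.length_drop]; omega
  rcases hv2 : v₁.drop (2 * ps'.length) with - | ⟨x₂, w⟩
  · exfalso; rw [hv2] at hlen₂; simp at hlen₂; omega
  rcases w with - | ⟨y₂, v₃⟩
  · exfalso; rw [hv2] at hlen₂; simp at hlen₂; omega
  rw [hv2] at h2
  have hplf : pairList [false] ++ Rest = false :: false :: Rest := rfl
  rw [hplf] at h2
  have h3 := pair_stepFF x₂ y₂ v₃ Rest h2
  have hdrop : (x :: v₁).drop (1 + 2 * (ps' ++ [false]).length) = v₃ := by
    rw [show 1 + 2 * ((ps' ++ [false]).length) = (2 * ps'.length + 2) + 1 by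
      simp only [List.length_append, List.length_singleton]; ring]
    rw [List.drop_succ_cons]
    rw [show 2 * ps'.length + 2 = 2 * ps'.length + 2 from rfl, ← List.drop_drop (i := 2) (j := 2 * ps'.length) (l := v₁),
      hv2]
    rfl
  rwa [hdrop]

/-- Structure of a block word: a leading `1` followed by pairs, the last pair `00`. -/
lemma blockWord_eq (a : List ℕ) (ha : a ≠ []) (hpos : ∀ x ∈ a, 0 < x) :
    ∃ ps' : List Bool, blockWord a = true :: pairList (ps' ++ [false]) := by
  classical
  set t := a.length with ht
  have ht1 : 1 ≤ t := by
    rcases a with - | ⟨x, tl⟩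
    · exact absurd rfl ha
    · simp [ht]
  set bf : ℕ → Bool := fun i => if (a.length - 1 - i) % 2 = 0 then false else true with hbf
  have hpat : ∀ i : ℕ,
      (if (a.length - 1 - i) % 2 = 0 then [false, false] else [false, true]) = [false, bf i] := by
    intro i; by_cases h : (a.length - 1 - i) % 2 = 0 <;> simp [hbf, h]
  have hstep : ∀ l : List ℕ,
      ((l.map fun i => (List.replicate (a.getD i 0) [false, bf i]).flatten).flatten)
        = pairList ((l.map fun i => List.replicate (a.getD i 0) (bf i)).flatten) := by
    intro l
    induction l with
    | nil => rfl
    | cons i tl ih =>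
      simp only [List.map_cons, List.flatten_cons, ih, pairList_append]
      congr 1
      simp [pairList, List.map_replicate]
  have hb1 : blockWord a = true :: ((List.range t).map fun i =>
      (List.replicate (a.getD i 0) [false, bf i]).flatten).flatten := by
    unfold blockWord
    refine congrArg (true :: ·) (congrArg List.flatten ?_)
    exact List.map_congr_left fun i _ => by rw [hpat i]
  rw [hstep (List.range t)] at hb1
  have hget : 0 < a.getD (t - 1) 0 := by
    have hlt : t - 1 < a.length := by omega
    rw [List.getD_eq_getElem a 0 hlt]
    exact hpos _ (List.getElem_mem hlt)
  obtain ⟨k, hk⟩ : ∃ k, a.getD (t - 1) 0 = k + 1 := ⟨a.getD (t - 1) 0 - 1, by omega⟩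
  have hbflast : bf (t - 1) = false := by
    have h0 : a.length - 1 - (t - 1) = 0 := by omega
    simp [hbf, h0]
  have hsplit : ((List.range t).map fun i => List.replicate (a.getD i 0) (bf i)).flatten
      = (((List.range (t - 1)).map fun i => List.replicate (a.getD i 0) (bf i)).flatten
          ++ List.replicate k false) ++ [false] := by
    conv_lhs => rw [show t = (t - 1) + 1 by omega, List.range_succ]
    rw [List.map_append, List.flatten_append]
    simp only [List.map_cons, List.map_nil, List.flatten_cons, List.flatten_nil,
      List.append_nil]
    rw [hbflast, hk, List.replicate_succ']
    rw [List.append_assoc]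
  exact ⟨_, by rw [hb1, hsplit]⟩

/-- Relation between a word and a block: same length and same value. -/
def BRel (v : List Bool) (a : List ℕ) : Prop :=
  v.length = (blockWord a).length ∧ wordVal v = wordVal (blockWord a)

/-- The main splitting lemma. -/
lemma main : ∀ (as : List (List ℕ)), (∀ a ∈ as, a ≠ []) → (∀ a ∈ as, ∀ x ∈ a, 0 < x) →
    ∀ w : List Bool, w.length = ((as.map blockWord).flatten).length →
    wordVal w = wordVal ((as.map blockWord).flatten) →
    ∃ ws : List (List Bool), w = ws.flatten ∧ List.Forall₂ BRel ws as
  | [], _, _, w, hlen, _ => by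
    refine ⟨[], ?_, List.Forall₂.nil⟩
    simpa using List.length_eq_zero_iff.mp (by simpa using hlen)
  | a :: as', hne, hpos, w, hlen, hval => by
    obtain ⟨ps', hB⟩ := blockWord_eq a (hne a (by simp)) (hpos a (by simp))
    set R := ((as'.map blockWord).flatten) with hR
    have hflat : ((((a :: as').map blockWord)).flatten) = blockWord a ++ R := by
      simp [hR]
    rw [hflat] at hlen hval
    have hnB : (blockWord a).length = 1 + 2 * (ps' ++ [false]).length := by
      rw [hB, List.length_cons, pairList_length]; ring
    have hlen' : w.length = (1 + 2 * (ps' ++ [false]).length) + R.length := by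
      rw [List.length_append, hnB] at hlen; exact hlen
    have hd0 : wordVal w - wordVal ((true :: pairList (ps' ++ [false])) ++ R) = 0 := by
      rw [← hB]; exact sub_eq_zero.mpr hval
    have hS3 := block_walk ps' w R hlen' hd0
    set n := (blockWord a).length with hn
    have hdn : w.drop (1 + 2 * (ps' ++ [false]).length) = w.drop n := by rw [hnB]
    rw [hdn] at hS3
    have hwlen : w.length = n + R.length := by
      rw [hlen, List.length_append, ← hn]
    have hlend : (w.drop n).length = R.length := by
      rw [List.length_drop, hwlen]; omega
    rcases hS3 with h0 | h1 | hm1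
    · -- boundary state 0 : recurse
      have hvald : wordVal (w.drop n) = wordVal R := by linarith [sub_eq_zero.mp h0]
      obtain ⟨ws', hflat', hF⟩ := main as' (fun b hb => hne b (by simp [hb]))
        (fun b hb => hpos b (by simp [hb])) (w.drop n) (by rw [hlend]) (by rw [hvald])
      refine ⟨w.take n :: ws', ?_, List.Forall₂.cons ⟨?_, ?_⟩ hF⟩
      · simp only [List.flatten_cons, ← hflat']
        exact (List.take_append_drop n w).symm
      · rw [List.length_take]; omega
      · -- value of the prefix
        have htl : (w.take n).length = n := by
          rw [List.length_take]; omega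
        have h1 := wordVal_append (w.take n) (w.drop n)
        rw [List.take_append_drop, htl] at h1
        have h2 := wordVal_append (blockWord a) R
        rw [← hn] at h2
        rw [hval, h2, hvald] at h1
        have hq : (0:ℝ) < gold⁻¹ ^ n := pow_pos (inv_pos.mpr gold_pos) n
        nlinarith [h1]
    · -- boundary state 1 : impossible
      exfalso
      rcases as' with - | ⟨a₂, as₂⟩
      · have hRnil : R = [] := by simp [hR]
        rw [hRnil] at hlend
        have hd : w.drop n = [] := List.length_eq_zero_iff.mp (by simpa using hlend)
        rw [hd, hRnil] at h1
        rw [wordVal_nil] at h1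
        norm_num at h1
      · obtain ⟨ps₂, hB₂⟩ := blockWord_eq a₂ (hne a₂ (by simp)) (hpos a₂ (by simp))
        have hRc : R = true :: (pairList (ps₂ ++ [false]) ++ (as₂.map blockWord).flatten) := by
          rw [hR]; simp only [List.map_cons, List.flatten_cons, hB₂, List.cons_append]
        rcases hv : w.drop n with - | ⟨x, v₁⟩
        · rw [hv, hRc] at hlend; simp at hlend
        rw [hv, hRc] at h1
        have e1 := step_eq x true v₁ (pairList (ps₂ ++ [false]) ++ (as₂.map blockWord).flatten)
        rw [h1, mul_one] at e1
        norm_num at e1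
        have hXl : (0:ℝ) ≤ if x then 1 else 0 := by split <;> norm_num
        have hXr : (if x then (1:ℝ) else 0) ≤ 1 := by split <;> norm_num
        have hv1 := wordVal_lt v₁
        have hv2 := wordVal_nonneg (pairList (ps₂ ++ [false]) ++ (as₂.map blockWord).flatten)
        have := one_lt_gold
        linarith
    · -- boundary state -1 : killed by the next block
      exfalso
      rcases as' with - | ⟨a₂, as₂⟩
      · have hRnil : R = [] := by simp [hR]
        rw [hRnil] at hlend
        have hd : w.drop n = [] := List.length_eq_zero_iff.mp (by simpa using hlend)
        rw [hd, hRnil] at hm1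
        rw [wordVal_nil] at hm1
        norm_num at hm1
      · obtain ⟨ps₂, hB₂⟩ := blockWord_eq a₂ (hne a₂ (by simp)) (hpos a₂ (by simp))
        have hRc : R = true :: (pairList (ps₂ ++ [false]) ++ (as₂.map blockWord).flatten) := by
          rw [hR]; simp only [List.map_cons, List.flatten_cons, hB₂, List.cons_append]
        rcases hv : w.drop n with - | ⟨x, v₁⟩
        · rw [hv, hRc] at hlend; simp at hlend
        rw [hv, hRc] at hm1
        have e1 := step_eq x true v₁ (pairList (ps₂ ++ [false]) ++ (as₂.map blockWord).flatten)
        rw [hm1] at e1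
        have hd' : wordVal v₁ -
            wordVal (pairList (ps₂ ++ [false]) ++ (as₂.map blockWord).flatten) = -(gold - 1) := by
          cases x <;> norm_num at e1
          · linarith
          · exfalso
            have hv1 := wordVal_nonneg v₁
            have hv2 := wordVal_lt (pairList (ps₂ ++ [false]) ++ (as₂.map blockWord).flatten)
            linarith [one_lt_gold]
        have hlen₂ : v₁.length
            = 2 * (ps₂ ++ [false]).length + ((as₂.map blockWord).flatten).length := by
          have hh : (x :: v₁).length = R.length := by rw [← hv]; exact hlend
          rw [hRc] at hh
          simp only [List.length_cons, List.length_append, pairList_length] at hh ⊢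
          omega
        exact kill (ps₂ ++ [false]) v₁ ((as₂.map blockWord).flatten) (by simp) hlen₂ hd'

lemma forall2_facts {ws : List (List Bool)} {as : List (List ℕ)}
    (h : List.Forall₂ BRel ws as) :
    ws.flatten.length = ((as.map blockWord).flatten).length ∧
      wordVal ws.flatten = wordVal ((as.map blockWord).flatten) := by
  induction h with
  | nil => exact ⟨rfl, rfl⟩
  | cons h₁ h₂ ih =>
    obtain ⟨hl, hv⟩ := h₁
    obtain ⟨ihl, ihv⟩ := ih
    constructor
    · simp only [List.flatten_cons, List.map_cons, List.length_append, hl, ihl]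
    · simp only [List.flatten_cons, List.map_cons]
      rw [wordVal_append, wordVal_append, hl, hv, ihv]

lemma wordF_nil : wordF [] = 1 := by
  have huniq : ∀ p : {v : List Bool // v.length = ([] : List Bool).length ∧
      wordVal v = wordVal []}, p = ⟨[], rfl, rfl⟩ := by
    rintro ⟨v, hv, -⟩
    exact Subtype.ext (List.length_eq_zero_iff.mp (by simpa using hv))
  rw [wordF]
  haveI : Subsingleton {v : List Bool // v.length = ([] : List Bool).length ∧
      wordVal v = wordVal []} := ⟨fun p q => (huniq p).trans (huniq q).symm⟩
  haveI : Nonempty {v : List Bool // v.length = ([] : List Bool).length ∧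
      wordVal v = wordVal []} := ⟨⟨[], rfl, rfl⟩⟩
  exact Nat.card_unique

lemma prod_lemma : ∀ (as : List (List ℕ)), (∀ a ∈ as, a ≠ []) → (∀ a ∈ as, ∀ x ∈ a, 0 < x) →
    wordF ((as.map blockWord).flatten) = (as.map fun a => wordF (blockWord a)).prod
  | [], _, _ => by simpa using wordF_nil
  | a :: as', hne, hpos => by
    have hflat : ((((a :: as').map blockWord)).flatten)
        = blockWord a ++ ((as'.map blockWord).flatten) := by simp
    have split : ∀ w : List Bool,
        w.length = (blockWord a ++ ((as'.map blockWord).flatten)).length →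
        wordVal w = wordVal (blockWord a ++ ((as'.map blockWord).flatten)) →
        ((w.take (blockWord a).length).length = (blockWord a).length ∧
          wordVal (w.take (blockWord a).length) = wordVal (blockWord a)) ∧
        ((w.drop (blockWord a).length).length = ((as'.map blockWord).flatten).length ∧
          wordVal (w.drop (blockWord a).length) = wordVal ((as'.map blockWord).flatten)) := by
      intro w hl hv
      obtain ⟨ws, hws, hF⟩ := main (a :: as') hne hpos w (by rw [hl, hflat]) (by rw [hv, hflat])
      rw [List.forall₂_cons_right_iff] at hF
      rcases hF with ⟨u, ws', ⟨hul, huv⟩, hF', rfl⟩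
      obtain ⟨hl', hv'⟩ := forall2_facts hF'
      have hw : w = u ++ ws'.flatten := by simpa using hws
      have htake : w.take (blockWord a).length = u := by
        rw [hw, ← hul]
        exact List.take_left (l₁ := u) (l₂ := ws'.flatten)
      have hdrop : w.drop (blockWord a).length = ws'.flatten := by
        rw [hw, ← hul]
        exact List.drop_left (l₁ := u) (l₂ := ws'.flatten)
      rw [htake, hdrop]
      exact ⟨⟨hul, huv⟩, ⟨hl', hv'⟩⟩
    have e : {w : List Bool // w.length = (blockWord a ++ ((as'.map blockWord).flatten)).length ∧
          wordVal w = wordVal (blockWord a ++ ((as'.map blockWord).flatten))} ≃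
        {u : List Bool // u.length = (blockWord a).length ∧
          wordVal u = wordVal (blockWord a)} ×
        {v : List Bool // v.length = ((as'.map blockWord).flatten).length ∧
          wordVal v = wordVal ((as'.map blockWord).flatten)} :=
      { toFun := fun w => ⟨⟨w.1.take (blockWord a).length, (split w.1 w.2.1 w.2.2).1⟩,
          ⟨w.1.drop (blockWord a).length, (split w.1 w.2.1 w.2.2).2⟩⟩
        invFun := fun p => ⟨p.1.1 ++ p.2.1, by
          constructor
          · rw [List.length_append, List.length_append, p.1.2.1, p.2.2.1]
          · rw [wordVal_append, wordVal_append, p.1.2.1, p.1.2.2, p.2.2.2]⟩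
        left_inv := by
          rintro ⟨w, hw⟩
          exact Subtype.ext (List.take_append_drop (blockWord a).length w)
        right_inv := by
          rintro ⟨⟨u, hu⟩, ⟨v, hv⟩⟩
          have h1 : (u ++ v).take (blockWord a).length = u := by
            rw [← hu.1]; exact List.take_left (l₁ := u) (l₂ := v)
          have h2 : (u ++ v).drop (blockWord a).length = v := by
            rw [← hu.1]; exact List.drop_left (l₁ := u) (l₂ := v)
          exact Prod.ext (Subtype.ext h1) (Subtype.ext h2) }
    have hcard : wordF (blockWord a ++ ((as'.map blockWord).flatten))
        = wordF (blockWord a) * wordF ((as'.map blockWord).flatten) := by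
      rw [wordF, wordF, wordF, Nat.card_congr e, Nat.card_prod]
    have ih := prod_lemma as' (fun b hb => hne b (by simp [hb]))
      (fun b hb => hpos b (by simp [hb]))
    rw [hflat, hcard, ih]
    simp only [List.map_cons, List.prod_cons]

end WFCB

/-- Every word with the same value and length as a concatenation of blocks splits into a
concatenation of words equivalent to the individual blocks; consequently the cardinality
function is blockwise multiplicative. -/
theorem wordF_concat_blocks (as : List (List ℕ)) (hk : as ≠ [])
    (hne : ∀ a ∈ as, a ≠ []) (hpos : ∀ a ∈ as, ∀ x ∈ a, 0 < x)
    (W : List Bool) (hW : W = (as.map blockWord).flatten) :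
    (∀ w : List Bool, w.length = W.length → wordVal w = wordVal W →
      ∃ ws : List (List Bool), w = ws.flatten ∧
        List.Forall₂ (fun v a => v.length = (blockWord a).length ∧
          wordVal v = wordVal (blockWord a)) ws as) ∧
    wordF W = (as.map fun a => wordF (blockWord a)).prod := by
  subst hW
  exact ⟨fun w hl hv => WFCB.main as hne hpos w hl hv, WFCB.prod_lemma as hne hpos⟩
end
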